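/- arXiv:1907.01270 — 7 statements merged into one kernel-verified Lean document; each statement's English description precedes it below -/
import Mathlib

section
/- (Admissibility of left contraction in LNS_Kt) For all multisets Γ, Δ, every formula A, and all (possibly empty) contexts G, H: if G ⇗ Γ,A,A ⇒ Δ ⇗ H is derivable in LNS_Kt, then G ⇗ Γ,A ⇒ Δ ⇗ H is derivable in LNS_Kt (with the same structural connectives ⇗ ∈ {↗,↙} in both sequents). -/
/-- Formulae of tense logic: atoms (indexed by naturals), ⊥, →, □, ◇, ■, ◆. -/
inductive Formula : Type
  | atom : ℕ → Formula
  | bot : Formula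
  | imp : Formula → Formula → Formula
  | box : Formula → Formula
  | dia : Formula → Formula
  | bbox : Formula → Formula
  | bdia : Formula → Formula

def Formula.neg (A : Formula) : Formula := A.imp .bot
def Formula.and (A B : Formula) : Formula := (A.imp B.neg).neg
def Formula.or (A B : Formula) : Formula := A.neg.imp B
def Formula.top : Formula := Formula.bot.imp .bot

/-- Formulas built from atoms, ⊥, →, □, ■ only (no diamonds). -/
def Formula.NoDia : Formula → Prop
  | .atom _ => True
  | .bot => True
  | .imp A B => A.NoDia ∧ B.NoDia
  | .box A => A.NoDia
  | .dia _ => False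
  | .bbox A => A.NoDia
  | .bdia _ => False

/-- Structural connectives: `up` is ↗ and `dn` is ↙. -/
inductive Dir : Type
  | up
  | dn

/-- Linear nested sequents: a nonempty list of components `Γ ⇒ Δ`
joined by the structural connectives ↗ (`up`) and ↙ (`dn`). -/
inductive LNS : Type
  | single (Γ Δ : Multiset Formula) : LNS
  | up (Γ Δ : Multiset Formula) (S : LNS) : LNS
  | dn (Γ Δ : Multiset Formula) (S : LNS) : LNS

/-- A (possibly empty) context: a list of components, each together with the
structural connective joining it to what follows. -/
abbrev Ctx := List (Multiset Formula × Multiset Formula × Dir)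

/-- `plug G S` is the linear nested sequent `G ⇗ S` (just `S` when `G` is empty). -/
def plug : Ctx → LNS → LNS
  | [], S => S
  | (Γ, Δ, Dir.up) :: G, S => LNS.up Γ Δ (plug G S)
  | (Γ, Δ, Dir.dn) :: G, S => LNS.dn Γ Δ (plug G S)

/-- The structural connective joining the context to what follows it (none if empty). -/
def lastDir : Ctx → Option Dir
  | [] => none
  | [(_, _, d)] => some d
  | _ :: G => lastDir G

/-- The calculus LNS_Kt. -/
inductive Deriv : LNS → Prop
  | id (G : Ctx) (Γ Δ : Multiset Formula) (p : ℕ) :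
      Deriv (plug G (.single (.atom p ::ₘ Γ) (.atom p ::ₘ Δ)))
  | botL (G : Ctx) (Γ Δ : Multiset Formula) :
      Deriv (plug G (.single (.bot ::ₘ Γ) Δ))
  | ew (G : Ctx) (Θ Λ : Multiset Formula) (d : Dir) (Γ Δ : Multiset Formula) :
      Deriv (plug G (.single Θ Λ)) →
      Deriv (plug (G ++ [(Θ, Λ, d)]) (.single Γ Δ))
  | impR (G : Ctx) (Γ Δ : Multiset Formula) (A B : Formula) :
      Deriv (plug G (.single (A ::ₘ Γ) (B ::ₘ A.imp B ::ₘ Δ))) →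
      Deriv (plug G (.single Γ (A.imp B ::ₘ Δ)))
  | impL (G : Ctx) (Γ Δ : Multiset Formula) (A B : Formula) :
      Deriv (plug G (.single (B ::ₘ A.imp B ::ₘ Γ) Δ)) →
      Deriv (plug G (.single (A.imp B ::ₘ Γ) (A ::ₘ Δ))) →
      Deriv (plug G (.single (A.imp B ::ₘ Γ) Δ))
  | boxR1 (G : Ctx) (Γ Δ Θ Λ : Multiset Formula) (A : Formula) :
      Deriv (plug G (.dn Γ (A ::ₘ Δ) (.single Θ (A.box ::ₘ Λ)))) →
      Deriv (plug G (.dn Γ Δ (.up Θ (A.box ::ₘ Λ) (.single 0 {A})))) →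
      Deriv (plug G (.dn Γ Δ (.single Θ (A.box ::ₘ Λ))))
  | bboxR1 (G : Ctx) (Γ Δ Θ Λ : Multiset Formula) (A : Formula) :
      Deriv (plug G (.up Γ (A ::ₘ Δ) (.single Θ (A.bbox ::ₘ Λ)))) →
      Deriv (plug G (.up Γ Δ (.dn Θ (A.bbox ::ₘ Λ) (.single 0 {A})))) →
      Deriv (plug G (.up Γ Δ (.single Θ (A.bbox ::ₘ Λ))))
  | boxR2 (G : Ctx) (Γ Δ : Multiset Formula) (A : Formula) :
      lastDir G ≠ some Dir.dn →
      Deriv (plug G (.up Γ (A.box ::ₘ Δ) (.single 0 {A}))) →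
      Deriv (plug G (.single Γ (A.box ::ₘ Δ)))
  | bboxR2 (G : Ctx) (Γ Δ : Multiset Formula) (A : Formula) :
      lastDir G ≠ some Dir.up →
      Deriv (plug G (.dn Γ (A.bbox ::ₘ Δ) (.single 0 {A}))) →
      Deriv (plug G (.single Γ (A.bbox ::ₘ Δ)))
  | boxL1 (G : Ctx) (Γ Δ Θ Λ : Multiset Formula) (A : Formula) :
      Deriv (plug G (.up (A.box ::ₘ Γ) Δ (.single (A ::ₘ Θ) Λ))) →
      Deriv (plug G (.up (A.box ::ₘ Γ) Δ (.single Θ Λ)))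
  | bboxL1 (G : Ctx) (Γ Δ Θ Λ : Multiset Formula) (A : Formula) :
      Deriv (plug G (.dn (A.bbox ::ₘ Γ) Δ (.single (A ::ₘ Θ) Λ))) →
      Deriv (plug G (.dn (A.bbox ::ₘ Γ) Δ (.single Θ Λ)))
  | boxL2 (G : Ctx) (Γ Δ Θ Λ : Multiset Formula) (A : Formula) :
      Deriv (plug G (.single (A ::ₘ Γ) Δ)) →
      Deriv (plug G (.dn Γ Δ (.single (A.box ::ₘ Θ) Λ)))
  | bboxL2 (G : Ctx) (Γ Δ Θ Λ : Multiset Formula) (A : Formula) :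
      Deriv (plug G (.single (A ::ₘ Γ) Δ)) →
      Deriv (plug G (.up Γ Δ (.single (A.bbox ::ₘ Θ) Λ)))

/-- A trailing context: a list of components, each preceded by the structural
connective joining it to what comes before. -/
abbrev TCtx := List (Dir × Multiset Formula × Multiset Formula)

/-- `withTail Γ Δ H` is the linear nested sequent `(Γ ⇒ Δ) ⇗ H`. -/
def withTail : Multiset Formula → Multiset Formula → TCtx → LNS
  | Γ, Δ, [] => .single Γ Δ
  | Γ, Δ, (Dir.up, Θ, Λ) :: H => .up Γ Δ (withTail Θ Λ H)
  | Γ, Δ, (Dir.dn, Θ, Λ) :: H => .dn Γ Δ (withTail Θ Λ H)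

/-! Every rule of LNS_Kt repeats its principal formulas in its premises, and its conclusion may
carry arbitrary further formulas. So each rule instance survives when every antecedent and
succedent of its conclusion and premises is replaced by a multiset with at least the same
elements, possibly with fewer repetitions; by induction on derivations the same holds for
derivable sequents, and contracting `A, A` to `A` is the special case. -/

theorem Multiset.exists_eq_cons_of_cons_subset {α : Type*} {a : α} {s t : Multiset α}
    (h : a ::ₘ s ⊆ t) : ∃ u, t = a ::ₘ u :=
  exists_cons_of_mem (cons_subset.1 h).1

inductive LNS.Subset : LNS → LNS → Prop
  | single {Γ Γ' Δ Δ'} : Γ ⊆ Γ' → Δ ⊆ Δ' → LNS.Subset (.single Γ Δ) (.single Γ' Δ')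
  | up {Γ Γ' Δ Δ' S S'} :
      Γ ⊆ Γ' → Δ ⊆ Δ' → LNS.Subset S S' → LNS.Subset (.up Γ Δ S) (.up Γ' Δ' S')
  | dn {Γ Γ' Δ Δ' S S'} :
      Γ ⊆ Γ' → Δ ⊆ Δ' → LNS.Subset S S' → LNS.Subset (.dn Γ Δ S) (.dn Γ' Δ' S')

abbrev Ctx.Subset : Ctx → Ctx → Prop :=
  List.Forall₂ fun c c' => c.1 ⊆ c'.1 ∧ c.2.1 ⊆ c'.2.1 ∧ c.2.2 = c'.2.2

theorem LNS.Subset.refl : ∀ S : LNS, S.Subset S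
  | .single Γ Δ => .single (.refl Γ) (.refl Δ)
  | .up Γ Δ S => .up (.refl Γ) (.refl Δ) (LNS.Subset.refl S)
  | .dn Γ Δ S => .dn (.refl Γ) (.refl Δ) (LNS.Subset.refl S)

theorem Ctx.Subset.refl (G : Ctx) : Ctx.Subset G G :=
  List.forall₂_same.2 fun _ _ => ⟨.refl _, .refl _, rfl⟩

theorem LNS.Subset.plug {G G' : Ctx} {S S' : LNS} (hG : Ctx.Subset G G') (hS : S.Subset S') :
    (_root_.plug G S).Subset (_root_.plug G' S') := by
  induction hG with
  | nil => exact hS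
  | @cons c c' G G' hc _ ih =>
    obtain ⟨Γ, Δ, d⟩ := c
    obtain ⟨Γ', Δ', d'⟩ := c'
    obtain ⟨hΓ, hΔ, rfl : d = d'⟩ := hc
    cases d
    · exact .up hΓ hΔ ih
    · exact .dn hΓ hΔ ih

theorem LNS.Subset.exists_of_plug_left :
    ∀ {G : Ctx} {S T : LNS}, (_root_.plug G S).Subset T →
      ∃ G' S', Ctx.Subset G G' ∧ S.Subset S' ∧ T = _root_.plug G' S'
  | [], _, T, h => ⟨[], T, .nil, h, rfl⟩
  | (_, _, .up) :: _, _, _, .up hΓ hΔ h =>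
    have ⟨G', S', hG, hS, hT⟩ := exists_of_plug_left h
    ⟨(_, _, .up) :: G', S', .cons ⟨hΓ, hΔ, rfl⟩ hG, hS, hT ▸ rfl⟩
  | (_, _, .dn) :: _, _, _, .dn hΓ hΔ h =>
    have ⟨G', S', hG, hS, hT⟩ := exists_of_plug_left h
    ⟨(_, _, .dn) :: G', S', .cons ⟨hΓ, hΔ, rfl⟩ hG, hS, hT ▸ rfl⟩

theorem Ctx.Subset.lastDir_eq : ∀ {G G' : Ctx}, Ctx.Subset G G' → lastDir G' = lastDir G
  | [], [], .nil => rfl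
  | [_], [_], .cons ⟨_, _, hd⟩ .nil => congrArg some hd.symm
  | _ :: _ :: _, _ :: _ :: _, .cons _ h => (lastDir_eq h :)

theorem Ctx.Subset.exists_of_append_singleton_left
    {c : Multiset Formula × Multiset Formula × Dir} :
    ∀ {G G₂ : Ctx}, Ctx.Subset (G ++ [c]) G₂ →
      ∃ G' Θ' Λ', G₂ = G' ++ [(Θ', Λ', c.2.2)] ∧ Ctx.Subset G G' ∧ c.1 ⊆ Θ' ∧ c.2.1 ⊆ Λ'
  | [], [(Θ', Λ', d')], .cons ⟨hΘ, hΛ, hd⟩ .nil => ⟨[], Θ', Λ', by rw [hd]; rfl, .nil, hΘ, hΛ⟩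
  | _ :: _, _ :: _, .cons hc h =>
    have ⟨G', Θ', Λ', hG₂, hG, hΘ, hΛ⟩ := exists_of_append_singleton_left h
    ⟨_ :: G', Θ', Λ', hG₂ ▸ rfl, .cons hc hG, hΘ, hΛ⟩

theorem LNS.Subset.withTail {Γ Γ' : Multiset Formula} (Δ : Multiset Formula) (hΓ : Γ ⊆ Γ') :
    ∀ H : TCtx, (_root_.withTail Γ Δ H).Subset (_root_.withTail Γ' Δ H)
  | [] => .single hΓ (.refl Δ)
  | (.up, _, _) :: _ => .up hΓ (.refl Δ) (.refl _)
  | (.dn, _, _) :: _ => .dn hΓ (.refl Δ) (.refl _)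

open Multiset in
theorem Deriv.mono {S T : LNS} (hS : Deriv S) (hST : S.Subset T) : Deriv T := by
  induction hS generalizing T with
  | id G Γ Δ p =>
    obtain ⟨G', _, -, ⟨hΓ, hΔ⟩, rfl⟩ := hST.exists_of_plug_left
    obtain ⟨Γ', rfl⟩ := exists_eq_cons_of_cons_subset hΓ
    obtain ⟨Δ', rfl⟩ := exists_eq_cons_of_cons_subset hΔ
    exact .id G' Γ' Δ' p
  | botL G Γ Δ =>
    obtain ⟨G', _, -, ⟨hΓ, -⟩, rfl⟩ := hST.exists_of_plug_left
    obtain ⟨Γ', rfl⟩ := exists_eq_cons_of_cons_subset hΓ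
    exact .botL G' Γ' _
  | ew G Θ Λ d Γ Δ _ ih =>
    obtain ⟨G₂, _, hG₂, ⟨-, -⟩, rfl⟩ := hST.exists_of_plug_left
    obtain ⟨G', Θ', Λ', rfl, hG, hΘ, hΛ⟩ := hG₂.exists_of_append_singleton_left
    exact .ew G' Θ' Λ' d _ _ (ih (.plug hG (.single hΘ hΛ)))
  | impR G Γ Δ A B _ ih =>
    obtain ⟨G', _, hG, ⟨hΓ, hΔ⟩, rfl⟩ := hST.exists_of_plug_left
    obtain ⟨Δ', rfl⟩ := exists_eq_cons_of_cons_subset hΔ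
    exact .impR G' _ Δ' A B
      (ih (.plug hG (.single (cons_subset_cons hΓ) (cons_subset_cons hΔ))))
  | impL G Γ Δ A B _ _ ih₁ ih₂ =>
    obtain ⟨G', _, hG, ⟨hΓ, hΔ⟩, rfl⟩ := hST.exists_of_plug_left
    obtain ⟨Γ', rfl⟩ := exists_eq_cons_of_cons_subset hΓ
    exact .impL G' Γ' _ A B (ih₁ (.plug hG (.single (cons_subset_cons hΓ) hΔ)))
      (ih₂ (.plug hG (.single hΓ (cons_subset_cons hΔ))))
  | boxR1 G Γ Δ Θ Λ A _ _ ih₁ ih₂ =>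
    obtain ⟨G', _, hG, _ | _ | ⟨hΓ, hΔ, hΘ, hΛ⟩, rfl⟩ := hST.exists_of_plug_left
    obtain ⟨Λ', rfl⟩ := exists_eq_cons_of_cons_subset hΛ
    exact .boxR1 G' _ _ _ Λ' A (ih₁ (.plug hG (.dn hΓ (cons_subset_cons hΔ) (.single hΘ hΛ))))
      (ih₂ (.plug hG (.dn hΓ hΔ (.up hΘ hΛ (.refl _)))))
  | bboxR1 G Γ Δ Θ Λ A _ _ ih₁ ih₂ =>
    obtain ⟨G', _, hG, _ | ⟨hΓ, hΔ, hΘ, hΛ⟩, rfl⟩ := hST.exists_of_plug_left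
    obtain ⟨Λ', rfl⟩ := exists_eq_cons_of_cons_subset hΛ
    exact .bboxR1 G' _ _ _ Λ' A (ih₁ (.plug hG (.up hΓ (cons_subset_cons hΔ) (.single hΘ hΛ))))
      (ih₂ (.plug hG (.up hΓ hΔ (.dn hΘ hΛ (.refl _)))))
  | boxR2 G Γ Δ A hd _ ih =>
    obtain ⟨G', _, hG, ⟨hΓ, hΔ⟩, rfl⟩ := hST.exists_of_plug_left
    obtain ⟨Δ', rfl⟩ := exists_eq_cons_of_cons_subset hΔ
    exact .boxR2 G' _ Δ' A (hG.lastDir_eq ▸ hd) (ih (.plug hG (.up hΓ hΔ (.refl _))))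
  | bboxR2 G Γ Δ A hd _ ih =>
    obtain ⟨G', _, hG, ⟨hΓ, hΔ⟩, rfl⟩ := hST.exists_of_plug_left
    obtain ⟨Δ', rfl⟩ := exists_eq_cons_of_cons_subset hΔ
    exact .bboxR2 G' _ Δ' A (hG.lastDir_eq ▸ hd) (ih (.plug hG (.dn hΓ hΔ (.refl _))))
  | boxL1 G Γ Δ Θ Λ A _ ih =>
    obtain ⟨G', _, hG, _ | ⟨hΓ, hΔ, hΘ, hΛ⟩, rfl⟩ := hST.exists_of_plug_left
    obtain ⟨Γ', rfl⟩ := exists_eq_cons_of_cons_subset hΓ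
    exact .boxL1 G' Γ' _ _ _ A (ih (.plug hG (.up hΓ hΔ (.single (cons_subset_cons hΘ) hΛ))))
  | bboxL1 G Γ Δ Θ Λ A _ ih =>
    obtain ⟨G', _, hG, _ | _ | ⟨hΓ, hΔ, hΘ, hΛ⟩, rfl⟩ := hST.exists_of_plug_left
    obtain ⟨Γ', rfl⟩ := exists_eq_cons_of_cons_subset hΓ
    exact .bboxL1 G' Γ' _ _ _ A (ih (.plug hG (.dn hΓ hΔ (.single (cons_subset_cons hΘ) hΛ))))
  | boxL2 G Γ Δ Θ Λ A _ ih =>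
    obtain ⟨G', _, hG, _ | _ | ⟨hΓ, hΔ, hΘ, -⟩, rfl⟩ := hST.exists_of_plug_left
    obtain ⟨Θ', rfl⟩ := exists_eq_cons_of_cons_subset hΘ
    exact .boxL2 G' _ _ Θ' _ A (ih (.plug hG (.single (cons_subset_cons hΓ) hΔ)))
  | bboxL2 G Γ Δ Θ Λ A _ ih =>
    obtain ⟨G', _, hG, _ | ⟨hΓ, hΔ, hΘ, -⟩, rfl⟩ := hST.exists_of_plug_left
    obtain ⟨Θ', rfl⟩ := exists_eq_cons_of_cons_subset hΘ
    exact .bboxL2 G' _ _ Θ' _ A (ih (.plug hG (.single (cons_subset_cons hΓ) hΔ)))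

/-- Admissibility of left contraction in LNS_Kt. -/
theorem contractionL_admissible (G : Ctx) (H : TCtx) (Γ Δ : Multiset Formula)
    (A : Formula) (h : Deriv (plug G (withTail (A ::ₘ A ::ₘ Γ) Δ H))) :
    Deriv (plug G (withTail (A ::ₘ Γ) Δ H)) :=
  h.mono (.plug (.refl G) (.withTail Δ (by simp) H))
end

section
/- (Admissibility of right contraction in LNS_Kt) For all multisets Γ, Δ, every formula A, and all (possibly empty) contexts G, H: if G ⇗ Γ ⇒ Δ,A,A ⇗ H is derivable in LNS_Kt, then G ⇗ Γ ⇒ Δ,A ⇗ H is derivable in LNS_Kt (with the same structural connectives ⇗ ∈ {↗,↙} in both sequents). -/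
/-! Every rule of LNS_Kt keeps its principal formula in the premises. Hence a derivation of `S`
can be replayed rule by rule on any `S'` with the same shape and left-hand sides whose right-hand
sides contain those of `S` as sets (`⊆` on multisets ignores multiplicities): a principal formula
on the right of `S'` is still there to be split off. Contracting `A, A` to `A` is the instance
`A ::ₘ A ::ₘ Δ ⊆ A ::ₘ Δ`. -/

theorem Multiset.exists_cons_of_cons_subset {α : Type*} {a : α} {s t : Multiset α}
    (h : a ::ₘ s ⊆ t) : ∃ t', t = a ::ₘ t' :=
  Multiset.exists_cons_of_mem (h (Multiset.mem_cons_self a s))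

inductive LNS.RightSubset : LNS → LNS → Prop
  | single {Γ Δ Δ' : Multiset Formula} (hΔ : Δ ⊆ Δ') : RightSubset (.single Γ Δ) (.single Γ Δ')
  | up {Γ Δ Δ' : Multiset Formula} {S S' : LNS} (hΔ : Δ ⊆ Δ') (hS : RightSubset S S') :
      RightSubset (.up Γ Δ S) (.up Γ Δ' S')
  | dn {Γ Δ Δ' : Multiset Formula} {S S' : LNS} (hΔ : Δ ⊆ Δ') (hS : RightSubset S S') :
      RightSubset (.dn Γ Δ S) (.dn Γ Δ' S')

inductive Ctx.RightSubset : Ctx → Ctx → Prop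
  | nil : RightSubset [] []
  | cons {Γ Δ Δ' : Multiset Formula} {d : Dir} {G G' : Ctx} (hΔ : Δ ⊆ Δ')
      (hG : RightSubset G G') : RightSubset ((Γ, Δ, d) :: G) ((Γ, Δ', d) :: G')

namespace Ctx.RightSubset

theorem refl : ∀ G : Ctx, RightSubset G G
  | [] => .nil
  | (_, _, _) :: G => .cons (Multiset.Subset.refl _) (refl G)

theorem lastDir_eq {G G' : Ctx} (h : RightSubset G G') : lastDir G' = lastDir G := by
  induction h with
  | nil => rfl
  | cons _ hG ih =>
    cases hG with
    | nil => rfl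
    | cons => exact ih

theorem append_singleton_inv {Θ Λ : Multiset Formula} {d : Dir} :
    ∀ {G G'' : Ctx}, RightSubset (G ++ [(Θ, Λ, d)]) G'' →
      ∃ G' Λ', RightSubset G G' ∧ Λ ⊆ Λ' ∧ G'' = G' ++ [(Θ, Λ', d)]
  | [], _, .cons hΛ .nil => ⟨[], _, .nil, hΛ, rfl⟩
  | (_, _, _) :: _, _, .cons hΔ hG =>
    let ⟨G', Λ', hG', hΛ, e⟩ := append_singleton_inv hG
    ⟨_ :: G', Λ', .cons hΔ hG', hΛ, e ▸ rfl⟩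

end Ctx.RightSubset

namespace LNS.RightSubset

theorem refl : ∀ S : LNS, RightSubset S S
  | .single _ _ => .single (Multiset.Subset.refl _)
  | .up _ _ S => .up (Multiset.Subset.refl _) (refl S)
  | .dn _ _ S => .dn (Multiset.Subset.refl _) (refl S)

theorem plug {G G' : Ctx} {X X' : LNS} (hG : Ctx.RightSubset G G') (hX : RightSubset X X') :
    RightSubset (_root_.plug G X) (_root_.plug G' X') := by
  induction hG with
  | nil => exact hX
  | @cons _ _ _ d _ _ hΔ _ ih =>
    cases d
    · exact .up hΔ ih
    · exact .dn hΔ ih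

theorem plug_inv : ∀ {G : Ctx} {X S' : LNS}, RightSubset (_root_.plug G X) S' →
    ∃ G' X', Ctx.RightSubset G G' ∧ RightSubset X X' ∧ S' = _root_.plug G' X'
  | [], _, _, h => ⟨[], _, .nil, h, rfl⟩
  | (_, _, .up) :: _, _, _, .up hΔ hS =>
    let ⟨G', X', hG, hX, e⟩ := plug_inv hS
    ⟨(_, _, .up) :: G', X', .cons hΔ hG, hX, e ▸ rfl⟩
  | (_, _, .dn) :: _, _, _, .dn hΔ hS =>
    let ⟨G', X', hG, hX, e⟩ := plug_inv hS
    ⟨(_, _, .dn) :: G', X', .cons hΔ hG, hX, e ▸ rfl⟩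

theorem withTail {Γ Δ Δ' : Multiset Formula} (hΔ : Δ ⊆ Δ') (H : TCtx) :
    RightSubset (_root_.withTail Γ Δ H) (_root_.withTail Γ Δ' H) := by
  cases H with
  | nil => exact .single hΔ
  | cons c H =>
    obtain ⟨_ | _, _, _⟩ := c
    · exact .up hΔ (refl _)
    · exact .dn hΔ (refl _)

end LNS.RightSubset

theorem Deriv.mono_right {S S' : LNS} (h : Deriv S) (hS : S.RightSubset S') : Deriv S' := by
  induction h generalizing S' with
  | id G Γ Δ p =>
    obtain ⟨G', _, -, ⟨hΔ⟩, rfl⟩ := hS.plug_inv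
    obtain ⟨Δ', rfl⟩ := Multiset.exists_cons_of_cons_subset hΔ
    exact .id G' Γ Δ' p
  | botL G Γ Δ =>
    obtain ⟨G', _, -, ⟨_⟩, rfl⟩ := hS.plug_inv
    exact .botL G' Γ _
  | ew G Θ Λ d Γ Δ _ ih =>
    obtain ⟨G'', _, hG'', ⟨_⟩, rfl⟩ := hS.plug_inv
    obtain ⟨G', Λ', hG, hΛ, rfl⟩ := hG''.append_singleton_inv
    exact .ew G' Θ Λ' d Γ _ (ih (.plug hG (.single hΛ)))
  | impR G Γ Δ A B _ ih =>
    obtain ⟨G', _, hG, ⟨hΔ⟩, rfl⟩ := hS.plug_inv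
    obtain ⟨Δ', rfl⟩ := Multiset.exists_cons_of_cons_subset hΔ
    exact .impR G' Γ Δ' A B
      (ih (.plug hG (.single (Multiset.cons_subset_cons hΔ))))
  | impL G Γ Δ A B _ _ ih₁ ih₂ =>
    obtain ⟨G', _, hG, ⟨hΔ⟩, rfl⟩ := hS.plug_inv
    exact .impL G' Γ _ A B (ih₁ (.plug hG (.single hΔ)))
      (ih₂ (.plug hG (.single (Multiset.cons_subset_cons hΔ))))
  | boxR1 G Γ Δ Θ Λ A _ _ ih₁ ih₂ =>
    obtain ⟨G', _, hG, (_ | _ | ⟨hΔ, ⟨hΛ⟩⟩), rfl⟩ := hS.plug_inv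
    obtain ⟨Λ', rfl⟩ := Multiset.exists_cons_of_cons_subset hΛ
    exact .boxR1 G' Γ _ Θ Λ' A
      (ih₁ (.plug hG (.dn (Multiset.cons_subset_cons hΔ) (.single hΛ))))
      (ih₂ (.plug hG (.dn hΔ (.up hΛ (.refl _)))))
  | bboxR1 G Γ Δ Θ Λ A _ _ ih₁ ih₂ =>
    obtain ⟨G', _, hG, (_ | ⟨hΔ, ⟨hΛ⟩⟩), rfl⟩ := hS.plug_inv
    obtain ⟨Λ', rfl⟩ := Multiset.exists_cons_of_cons_subset hΛ
    exact .bboxR1 G' Γ _ Θ Λ' A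
      (ih₁ (.plug hG (.up (Multiset.cons_subset_cons hΔ) (.single hΛ))))
      (ih₂ (.plug hG (.up hΔ (.dn hΛ (.refl _)))))
  | boxR2 G Γ Δ A hG_last _ ih =>
    obtain ⟨G', _, hG, ⟨hΔ⟩, rfl⟩ := hS.plug_inv
    obtain ⟨Δ', rfl⟩ := Multiset.exists_cons_of_cons_subset hΔ
    exact .boxR2 G' Γ Δ' A (hG.lastDir_eq ▸ hG_last) (ih (.plug hG (.up hΔ (.refl _))))
  | bboxR2 G Γ Δ A hG_last _ ih =>
    obtain ⟨G', _, hG, ⟨hΔ⟩, rfl⟩ := hS.plug_inv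
    obtain ⟨Δ', rfl⟩ := Multiset.exists_cons_of_cons_subset hΔ
    exact .bboxR2 G' Γ Δ' A (hG.lastDir_eq ▸ hG_last) (ih (.plug hG (.dn hΔ (.refl _))))
  | boxL1 G Γ Δ Θ Λ A _ ih =>
    obtain ⟨G', _, hG, (_ | ⟨hΔ, ⟨hΛ⟩⟩), rfl⟩ := hS.plug_inv
    exact .boxL1 G' Γ _ Θ _ A (ih (.plug hG (.up hΔ (.single hΛ))))
  | bboxL1 G Γ Δ Θ Λ A _ ih =>
    obtain ⟨G', _, hG, (_ | _ | ⟨hΔ, ⟨hΛ⟩⟩), rfl⟩ := hS.plug_inv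
    exact .bboxL1 G' Γ _ Θ _ A (ih (.plug hG (.dn hΔ (.single hΛ))))
  | boxL2 G Γ Δ Θ Λ A _ ih =>
    obtain ⟨G', _, hG, (_ | _ | ⟨hΔ, ⟨_⟩⟩), rfl⟩ := hS.plug_inv
    exact .boxL2 G' Γ _ Θ _ A (ih (.plug hG (.single hΔ)))
  | bboxL2 G Γ Δ Θ Λ A _ ih =>
    obtain ⟨G', _, hG, (_ | ⟨hΔ, ⟨_⟩⟩), rfl⟩ := hS.plug_inv
    exact .bboxL2 G' Γ _ Θ _ A (ih (.plug hG (.single hΔ)))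

/-- Admissibility of right contraction in LNS_Kt. -/
theorem contractionR_admissible (G : Ctx) (H : TCtx) (Γ Δ : Multiset Formula)
    (A : Formula) (h : Deriv (plug G (withTail Γ (A ::ₘ A ::ₘ Δ) H))) :
    Deriv (plug G (withTail Γ (A ::ₘ Δ) H)) :=
  h.mono_right <| .plug (.refl G) <| .withTail
    (Multiset.cons_subset.2 ⟨Multiset.mem_cons_self A Δ, Multiset.Subset.refl _⟩) H
end

section
/- (Generalised initial sequents) For every formula A built from atoms, ⊥, →, □, ■, every possibly empty context G, and all multisets Γ, Δ: the linear nested sequent G ⇗ Γ,A ⇒ A,Δ is derivable in LNS_Kt. -/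
/-!
Induction on `A`. For `□A` there are two cases. If the active component may receive a
fresh `↗`-child, `□_R^2` creates `ε ⇒ A`, and `□_L^1` copies `A` into it from `□A` on the
left, so the child is an instance of the induction hypothesis. If the active component is
itself a `↙`-child, `□_R^2` is unavailable and `□_R^1` additionally asks for `A` on the right
of the parent, where `□_L^2` puts `A` on the left as well. The `■` case is the mirror image.
-/

lemma plug_append (G H : Ctx) (S : LNS) : plug (G ++ H) S = plug G (plug H S) := by
  induction G with
  | nil => rfl
  | cons c G ih => obtain ⟨Γ, Δ, d⟩ := c; cases d <;> simp only [List.cons_append, plug, ih]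

lemma exists_eq_append_of_lastDir_eq_some {G : Ctx} {d : Dir} (h : lastDir G = some d) :
    ∃ G' Γ Δ, G = G' ++ [(Γ, Δ, d)] := by
  induction G with
  | nil => simp [lastDir] at h
  | cons c G ih =>
    cases G with
    | nil =>
      obtain ⟨Γ, Δ, d'⟩ := c
      cases h
      exact ⟨[], Γ, Δ, rfl⟩
    | cons c' G =>
      obtain ⟨G', Γ, Δ, hG⟩ := ih h
      exact ⟨c :: G', Γ, Δ, by rw [hG, List.cons_append]⟩

namespace Formula

def InitDerivable (A : Formula) : Prop :=
  ∀ (G : Ctx) (Γ Δ : Multiset Formula), Deriv (plug G (.single (A ::ₘ Γ) (A ::ₘ Δ)))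

namespace InitDerivable

variable {A B : Formula}

lemma atom (p : ℕ) : (atom p).InitDerivable := fun G Γ Δ => Deriv.id G Γ Δ p

lemma bot : bot.InitDerivable := fun G Γ _ => Deriv.botL G Γ _

lemma imp (hA : A.InitDerivable) (hB : B.InitDerivable) : (A.imp B).InitDerivable := by
  intro G Γ Δ
  apply Deriv.impR G (A.imp B ::ₘ Γ) Δ A B
  rw [Multiset.cons_swap A]
  apply Deriv.impL G (A ::ₘ Γ) (B ::ₘ A.imp B ::ₘ Δ) A B
  · exact hB G (A.imp B ::ₘ A ::ₘ Γ) (A.imp B ::ₘ Δ)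
  · rw [Multiset.cons_swap (A.imp B)]
    exact hA G (A.imp B ::ₘ Γ) (B ::ₘ A.imp B ::ₘ Δ)

lemma deriv_up_box (hA : A.InitDerivable) (G : Ctx) (Γ Δ : Multiset Formula) :
    Deriv (plug G (.up (A.box ::ₘ Γ) Δ (.single 0 {A}))) := by
  apply Deriv.boxL1 G Γ Δ 0 {A} A
  simpa [plug_append, plug] using hA (G ++ [(A.box ::ₘ Γ, Δ, Dir.up)]) 0 0

lemma deriv_dn_bbox (hA : A.InitDerivable) (G : Ctx) (Γ Δ : Multiset Formula) :
    Deriv (plug G (.dn (A.bbox ::ₘ Γ) Δ (.single 0 {A}))) := by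
  apply Deriv.bboxL1 G Γ Δ 0 {A} A
  simpa [plug_append, plug] using hA (G ++ [(A.bbox ::ₘ Γ, Δ, Dir.dn)]) 0 0

lemma box (hA : A.InitDerivable) : A.box.InitDerivable := by
  intro G Γ Δ
  by_cases h : lastDir G = some Dir.dn
  · obtain ⟨G, Θ, Λ, rfl⟩ := exists_eq_append_of_lastDir_eq_some h
    rw [plug_append]
    apply Deriv.boxR1 G Θ Λ (A.box ::ₘ Γ) Δ A
    · exact Deriv.boxL2 G Θ (A ::ₘ Λ) Γ (A.box ::ₘ Δ) A (hA G Θ Λ)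
    · simpa only [plug_append, plug] using
        hA.deriv_up_box (G ++ [(Θ, Λ, Dir.dn)]) Γ (A.box ::ₘ Δ)
  · exact Deriv.boxR2 G (A.box ::ₘ Γ) Δ A h (hA.deriv_up_box G Γ (A.box ::ₘ Δ))

lemma bbox (hA : A.InitDerivable) : A.bbox.InitDerivable := by
  intro G Γ Δ
  by_cases h : lastDir G = some Dir.up
  · obtain ⟨G, Θ, Λ, rfl⟩ := exists_eq_append_of_lastDir_eq_some h
    rw [plug_append]
    apply Deriv.bboxR1 G Θ Λ (A.bbox ::ₘ Γ) Δ A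
    · exact Deriv.bboxL2 G Θ (A ::ₘ Λ) Γ (A.bbox ::ₘ Δ) A (hA G Θ Λ)
    · simpa only [plug_append, plug] using
        hA.deriv_dn_bbox (G ++ [(Θ, Λ, Dir.up)]) Γ (A.bbox ::ₘ Δ)
  · exact Deriv.bboxR2 G (A.bbox ::ₘ Γ) Δ A h (hA.deriv_dn_bbox G Γ (A.bbox ::ₘ Δ))

end InitDerivable

lemma NoDia.initDerivable {A : Formula} (hA : A.NoDia) : A.InitDerivable := by
  induction A with
  | atom p => exact .atom p
  | bot => exact .bot
  | imp A B ihA ihB => exact .imp (ihA hA.1) (ihB hA.2)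
  | box A ih => exact .box (ih hA)
  | bbox A ih => exact .bbox (ih hA)
  | dia | bdia => exact hA.elim

end Formula

/-- Generalised initial sequents: `G ⇗ Γ,A ⇒ A,Δ` is derivable in LNS_Kt for
every formula A built from atoms, ⊥, →, □, ■. -/
theorem generalised_init (A : Formula) (hA : A.NoDia) (G : Ctx)
    (Γ Δ : Multiset Formula) :
    Deriv (plug G (.single (A ::ₘ Γ) (A ::ₘ Δ))) :=
  hA.initDerivable G Γ Δ
end

section
/- (Admissibility of necessitation in LNS_Kt) For every formula A: if the linear nested sequent ε ⇒ A is derivable in LNS_Kt, then both ε ⇒ □A and ε ⇒ ■A are derivable in LNS_Kt. -/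
lemma lastDir_cons_of_ne_nil (c : Multiset Formula × Multiset Formula × Dir) {G : Ctx}
    (hG : G ≠ []) : lastDir (c :: G) = lastDir G := by
  cases G with
  | nil => exact absurd rfl hG
  | cons => rfl

lemma lastDir_cons_cons (c c' : Multiset Formula × Multiset Formula × Dir) (G : Ctx) :
    lastDir (c :: c' :: G) = lastDir (c' :: G) := rfl

lemma plug_cons_eq_dn {c : Multiset Formula × Multiset Formula × Dir} {G : Ctx} {S K : LNS}
    {Γ Δ : Multiset Formula} (h : plug (c :: G) S = .dn Γ Δ K) :
    c = (Γ, Δ, .dn) ∧ K = plug G S := by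
  obtain ⟨Γ', Δ', _ | _⟩ := c <;> simp_all [plug]

/-- The rules of LNS_Kt as schemata `Ps / C` on the active end of a sequent `G ⇗ C`; the index
is `lastDir G`, which only the rules `□R2` and `■R2` inspect. -/
inductive Rule : Option Dir → LNS → List LNS → Prop
  | id {d} (Γ Δ : Multiset Formula) (p : ℕ) :
      Rule d (.single (.atom p ::ₘ Γ) (.atom p ::ₘ Δ)) []
  | botL {d} (Γ Δ : Multiset Formula) : Rule d (.single (.bot ::ₘ Γ) Δ) []
  | ew {d} (Θ Λ : Multiset Formula) (e : Dir) (Γ Δ : Multiset Formula) :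
      Rule d (plug [(Θ, Λ, e)] (.single Γ Δ)) [.single Θ Λ]
  | impR {d} (Γ Δ : Multiset Formula) (A B : Formula) :
      Rule d (.single Γ (A.imp B ::ₘ Δ)) [.single (A ::ₘ Γ) (B ::ₘ A.imp B ::ₘ Δ)]
  | impL {d} (Γ Δ : Multiset Formula) (A B : Formula) :
      Rule d (.single (A.imp B ::ₘ Γ) Δ)
        [.single (B ::ₘ A.imp B ::ₘ Γ) Δ, .single (A.imp B ::ₘ Γ) (A ::ₘ Δ)]
  | boxR1 {d} (Γ Δ Θ Λ : Multiset Formula) (A : Formula) :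
      Rule d (.dn Γ Δ (.single Θ (A.box ::ₘ Λ)))
        [.dn Γ (A ::ₘ Δ) (.single Θ (A.box ::ₘ Λ)),
          .dn Γ Δ (.up Θ (A.box ::ₘ Λ) (.single 0 {A}))]
  | bboxR1 {d} (Γ Δ Θ Λ : Multiset Formula) (A : Formula) :
      Rule d (.up Γ Δ (.single Θ (A.bbox ::ₘ Λ)))
        [.up Γ (A ::ₘ Δ) (.single Θ (A.bbox ::ₘ Λ)),
          .up Γ Δ (.dn Θ (A.bbox ::ₘ Λ) (.single 0 {A}))]
  | boxR2 {d} (Γ Δ : Multiset Formula) (A : Formula) (hd : d ≠ some .dn) :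
      Rule d (.single Γ (A.box ::ₘ Δ)) [.up Γ (A.box ::ₘ Δ) (.single 0 {A})]
  | bboxR2 {d} (Γ Δ : Multiset Formula) (A : Formula) (hd : d ≠ some .up) :
      Rule d (.single Γ (A.bbox ::ₘ Δ)) [.dn Γ (A.bbox ::ₘ Δ) (.single 0 {A})]
  | boxL1 {d} (Γ Δ Θ Λ : Multiset Formula) (A : Formula) :
      Rule d (.up (A.box ::ₘ Γ) Δ (.single Θ Λ))
        [.up (A.box ::ₘ Γ) Δ (.single (A ::ₘ Θ) Λ)]
  | bboxL1 {d} (Γ Δ Θ Λ : Multiset Formula) (A : Formula) :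
      Rule d (.dn (A.bbox ::ₘ Γ) Δ (.single Θ Λ))
        [.dn (A.bbox ::ₘ Γ) Δ (.single (A ::ₘ Θ) Λ)]
  | boxL2 {d} (Γ Δ Θ Λ : Multiset Formula) (A : Formula) :
      Rule d (.dn Γ Δ (.single (A.box ::ₘ Θ) Λ)) [.single (A ::ₘ Γ) Δ]
  | bboxL2 {d} (Γ Δ Θ Λ : Multiset Formula) (A : Formula) :
      Rule d (.up Γ Δ (.single (A.bbox ::ₘ Θ) Λ)) [.single (A ::ₘ Γ) Δ]

lemma Deriv.of_rule {G : Ctx} {C : LNS} {Ps : List LNS} (h : Rule (lastDir G) C Ps)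
    (hPs : ∀ P ∈ Ps, Deriv (plug G P)) : Deriv (plug G C) := by
  cases h with
  | id => exact .id G _ _ _
  | botL => exact .botL G _ _
  | ew Θ Λ e Γ Δ => rw [← plug_append]; exact .ew G Θ Λ e Γ Δ (hPs _ (by simp))
  | impR => exact .impR G _ _ _ _ (hPs _ (by simp))
  | impL => exact .impL G _ _ _ _ (hPs _ (by simp)) (hPs _ (by simp))
  | boxR1 => exact .boxR1 G _ _ _ _ _ (hPs _ (by simp)) (hPs _ (by simp))
  | bboxR1 => exact .bboxR1 G _ _ _ _ _ (hPs _ (by simp)) (hPs _ (by simp))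
  | boxR2 _ _ _ hd => exact .boxR2 G _ _ _ hd (hPs _ (by simp))
  | bboxR2 _ _ _ hd => exact .bboxR2 G _ _ _ hd (hPs _ (by simp))
  | boxL1 => exact .boxL1 G _ _ _ _ _ (hPs _ (by simp))
  | bboxL1 => exact .bboxL1 G _ _ _ _ _ (hPs _ (by simp))
  | boxL2 => exact .boxL2 G _ _ _ _ _ (hPs _ (by simp))
  | bboxL2 => exact .bboxL2 G _ _ _ _ _ (hPs _ (by simp))

/-- `Deriv` with all sequents drawn from a finite set `Φ`; this finiteness makes the replays of the
derivation of `A` below terminate. -/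
inductive DerivIn (Φ : Finset LNS) : LNS → Prop
  | rule {G : Ctx} {C : LNS} {Ps : List LNS} :
      Rule (lastDir G) C Ps → (∀ P ∈ Ps, DerivIn Φ (plug G P)) → plug G C ∈ Φ →
        DerivIn Φ (plug G C)

lemma DerivIn.mono {Φ Φ' : Finset LNS} {S : LNS} (h : DerivIn Φ S) (hΦ : Φ ⊆ Φ') :
    DerivIn Φ' S := by
  induction h with
  | rule hrule _ hmem ih => exact .rule hrule ih (hΦ hmem)

open scoped Classical in
lemma DerivIn.exists_of_rule {G : Ctx} {C : LNS} {Ps : List LNS} (h : Rule (lastDir G) C Ps)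
    (hPs : ∀ P ∈ Ps, ∃ Φ, DerivIn Φ (plug G P)) : ∃ Φ, DerivIn Φ (plug G C) := by
  choose! Φ hΦ using hPs
  refine ⟨insert (plug G C) (Ps.toFinset.biUnion Φ),
    .rule h (fun P hP => (hΦ P hP).mono ?_) (Finset.mem_insert_self _ _)⟩
  exact (Finset.subset_biUnion_of_mem Φ (List.mem_toFinset.2 hP)).trans (Finset.subset_insert _ _)

lemma Deriv.exists_derivIn {S : LNS} (h : Deriv S) : ∃ Φ, DerivIn Φ S := by
  induction h with
  | id G Γ Δ p => exact DerivIn.exists_of_rule (.id Γ Δ p) (by simp)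
  | botL G Γ Δ => exact DerivIn.exists_of_rule (.botL Γ Δ) (by simp)
  | ew G Θ Λ e Γ Δ _ ih =>
      rw [plug_append]; exact DerivIn.exists_of_rule (.ew Θ Λ e Γ Δ) (by simpa using ih)
  | impR G Γ Δ A B _ ih => exact DerivIn.exists_of_rule (.impR Γ Δ A B) (by simpa using ih)
  | impL G Γ Δ A B _ _ ih₁ ih₂ =>
      exact DerivIn.exists_of_rule (.impL Γ Δ A B) (by simp [ih₁, ih₂])
  | boxR1 G Γ Δ Θ Λ A _ _ ih₁ ih₂ =>
      exact DerivIn.exists_of_rule (.boxR1 Γ Δ Θ Λ A) (by simp [ih₁, ih₂])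
  | bboxR1 G Γ Δ Θ Λ A _ _ ih₁ ih₂ =>
      exact DerivIn.exists_of_rule (.bboxR1 Γ Δ Θ Λ A) (by simp [ih₁, ih₂])
  | boxR2 G Γ Δ A hd _ ih =>
      exact DerivIn.exists_of_rule (.boxR2 Γ Δ A hd) (by simpa using ih)
  | bboxR2 G Γ Δ A hd _ ih =>
      exact DerivIn.exists_of_rule (.bboxR2 Γ Δ A hd) (by simpa using ih)
  | boxL1 G Γ Δ Θ Λ A _ ih =>
      exact DerivIn.exists_of_rule (.boxL1 Γ Δ Θ Λ A) (by simpa using ih)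
  | bboxL1 G Γ Δ Θ Λ A _ ih =>
      exact DerivIn.exists_of_rule (.bboxL1 Γ Δ Θ Λ A) (by simpa using ih)
  | boxL2 G Γ Δ Θ Λ A _ ih =>
      exact DerivIn.exists_of_rule (.boxL2 Γ Δ Θ Λ A) (by simpa using ih)
  | bboxL2 G Γ Δ Θ Λ A _ ih =>
      exact DerivIn.exists_of_rule (.bboxL2 Γ Δ Θ Λ A) (by simpa using ih)

def Formula.swap : Formula → Formula
  | .atom p => .atom p
  | .bot => .bot
  | .imp A B => .imp A.swap B.swap
  | .box A => .bbox A.swap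
  | .dia A => .bdia A.swap
  | .bbox A => .box A.swap
  | .bdia A => .dia A.swap

@[simp] lemma Formula.swap_swap (A : Formula) : A.swap.swap = A := by
  induction A <;> simp [Formula.swap, *]

def Dir.swap : Dir → Dir
  | .up => .dn
  | .dn => .up

def LNS.swap : LNS → LNS
  | .single Γ Δ => .single (Γ.map Formula.swap) (Δ.map Formula.swap)
  | .up Γ Δ S => .dn (Γ.map Formula.swap) (Δ.map Formula.swap) S.swap
  | .dn Γ Δ S => .up (Γ.map Formula.swap) (Δ.map Formula.swap) S.swap

def Ctx.swap (G : Ctx) : Ctx :=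
  G.map fun c => (c.1.map Formula.swap, c.2.1.map Formula.swap, c.2.2.swap)

lemma plug_swap (G : Ctx) (S : LNS) : (plug G S).swap = plug (Ctx.swap G) S.swap := by
  induction G with
  | nil => rfl
  | cons c G ih => obtain ⟨Γ, Δ, _ | _⟩ := c <;> simp [plug, Ctx.swap, LNS.swap, Dir.swap, ih]

lemma lastDir_swap (G : Ctx) : lastDir (Ctx.swap G) = (lastDir G).map Dir.swap := by
  induction G with
  | nil => rfl
  | cons c G ih =>
      cases G with
      | nil => rfl
      | cons c' G => simpa [Ctx.swap, lastDir_cons_of_ne_nil] using ih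

lemma Rule.swap {d : Option Dir} {C : LNS} {Ps : List LNS} (h : Rule d C Ps) :
    Rule (d.map Dir.swap) C.swap (Ps.map LNS.swap) := by
  cases h with
  | ew Θ Λ e Γ Δ =>
      simpa [plug_swap, LNS.swap, Ctx.swap] using
        Rule.ew (Θ.map Formula.swap) (Λ.map Formula.swap) e.swap _ _
  | boxR2 Γ Δ A hd =>
      simpa [LNS.swap, Formula.swap] using
        Rule.bboxR2 (Γ.map Formula.swap) (Δ.map Formula.swap) A.swap
          (by rcases d with _ | _ | _ <;> simp_all [Dir.swap])
  | bboxR2 Γ Δ A hd =>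
      simpa [LNS.swap, Formula.swap] using
        Rule.boxR2 (Γ.map Formula.swap) (Δ.map Formula.swap) A.swap
          (by rcases d with _ | _ | _ <;> simp_all [Dir.swap])
  | _ =>
      simp only [LNS.swap, Formula.swap, Multiset.map_cons, List.map]
      constructor

lemma Deriv.swap {S : LNS} (h : Deriv S) : Deriv S.swap := by
  obtain ⟨Φ, hΦ⟩ := h.exists_derivIn
  clear h
  induction hΦ with
  | rule hrule _ _ ih =>
      rw [plug_swap]
      exact Deriv.of_rule (by rw [lastDir_swap]; exact hrule.swap) (by simpa [plug_swap] using ih)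

def LNS.addHead (M N : Multiset Formula) : LNS → LNS
  | .single Γ Δ => .single (Γ + M) (Δ + N)
  | .up Γ Δ S => .up (Γ + M) (Δ + N) S
  | .dn Γ Δ S => .dn (Γ + M) (Δ + N) S

lemma addHead_plug_cons (M N : Multiset Formula) (c : Multiset Formula × Multiset Formula × Dir)
    (G : Ctx) (S : LNS) :
    (plug (c :: G) S).addHead M N = plug ((c.1 + M, c.2.1 + N, c.2.2) :: G) S := by
  obtain ⟨Γ, Δ, _ | _⟩ := c <;> rfl

lemma Rule.addHead {d : Option Dir} {C : LNS} {Ps : List LNS} (h : Rule d C Ps)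
    (M N : Multiset Formula) : Rule d (C.addHead M N) (Ps.map (LNS.addHead M N)) := by
  cases h with
  | ew Θ Λ e Γ Δ => rw [addHead_plug_cons]; exact Rule.ew (Θ + M) (Λ + N) e Γ Δ
  | _ =>
      simp only [LNS.addHead, Multiset.cons_add, List.map]
      constructor <;> assumption

lemma Rule.root {d : Option Dir} {C : LNS} {Ps : List LNS} (h : Rule d C Ps) :
    Rule none C Ps := by
  cases h <;> constructor <;> simp

lemma Rule.some_up_or_bboxR2 {d : Option Dir} {C : LNS} {Ps : List LNS} (h : Rule d C Ps) :
    Rule (some .up) C Ps ∨ ∃ Γ Δ B, C = .single Γ (B.bbox ::ₘ Δ) ∧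
      Ps = [.dn Γ (B.bbox ::ₘ Δ) (.single 0 {B})] := by
  cases h with
  | bboxR2 Γ Δ B => exact .inr ⟨Γ, Δ, B, rfl, rfl⟩
  | _ => left; constructor <;> simp

lemma Deriv.addHead_of_rule {c : Multiset Formula × Multiset Formula × Dir} {G : Ctx} {C : LNS}
    {Ps : List LNS} {M N : Multiset Formula} (h : Rule (lastDir (c :: G)) C Ps)
    (hPs : ∀ P ∈ Ps, Deriv ((plug G P).addHead M N)) : Deriv ((plug G C).addHead M N) := by
  cases G with
  | nil => exact Deriv.of_rule (G := []) (h.root.addHead M N) (by simpa [plug] using hPs)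
  | cons c' G =>
      rw [addHead_plug_cons]
      refine Deriv.of_rule ?_ fun P hP => by simpa [addHead_plug_cons] using hPs P hP
      rw [lastDir_cons_cons] at h
      cases G <;> exact h

section Necessitation

open scoped Classical

variable (A : Formula)

/-- Stated with `a + P` rather than `a ≤ P`, so that raising the thresholds needs no multiset
subtraction. -/
def Prefixed (a b : Multiset Formula) (S : LNS) : Prop :=
  ∀ P N, Deriv (.up (a + P) (A.box ::ₘ (b + N)) S)

def HeadWeakened (a b : Multiset Formula) (K : LNS) : Prop :=
  ∀ M N, Deriv (K.addHead (a + M) (A.box ::ₘ (b + N)))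

def Restartable (a b : Multiset Formula) (S : LNS) : Prop :=
  ∀ x y, Prefixed A (a + x) (b + y) S → Prefixed A (a + x) (b + y) (.single 0 {A})

def Covered (Ψ : Finset LNS) (a b : Multiset Formula) : Prop :=
  ∀ S ∈ Ψ, Prefixed A a b S

/-- The second clause is only claimed for roots not yet in `Ψ`: proving it may replay the
derivation of `A` with that root added to `Ψ`. -/
def Liftable (Φ Ψ : Finset LNS) (a b : Multiset Formula) (W : LNS) : Prop :=
  Prefixed A a b W ∧
    ∀ Γ Δ K, W = .dn Γ Δ K → LNS.single Γ Δ ∈ Φ \ Ψ → HeadWeakened A a b K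

variable {A} {a b : Multiset Formula}

lemma Prefixed.mono {S : LNS} (h : Prefixed A a b S) (x y : Multiset Formula) :
    Prefixed A (a + x) (b + y) S := fun P N => by
  simpa [add_assoc] using h (x + P) (y + N)

lemma Covered.mono {Ψ : Finset LNS} (h : Covered A Ψ a b) (x y : Multiset Formula) :
    Covered A Ψ (a + x) (b + y) := fun S hS => (h S hS).mono x y

lemma Covered.insert {Ψ : Finset LNS} {S : LNS} (hΨ : Covered A Ψ a b) (hS : Prefixed A a b S) :
    Covered A (insert S Ψ) a b := by
  intro S' hS'
  rcases Finset.mem_insert.1 hS' with rfl | hS'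
  exacts [hS, hΨ S' hS']

lemma Prefixed.deriv_box (h : Prefixed A a b (.single 0 {A})) (P N : Multiset Formula) :
    Deriv (.single (a + P) (A.box ::ₘ (b + N))) :=
  Deriv.boxR2 [] _ _ A (by simp [lastDir]) (h P N)

lemma prefixed_of_rule {G : Ctx} {C : LNS} {Ps : List LNS} (h : Rule (lastDir G) C Ps)
    (hG : G ≠ [] ∨ Rule (some .up) C Ps) (ih : ∀ P ∈ Ps, Prefixed A a b (plug G P)) :
    Prefixed A a b (plug G C) := by
  intro P N
  refine Deriv.of_rule (G := (a + P, A.box ::ₘ (b + N), .up) :: G) ?_ fun Q hQ => ih Q hQ P N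
  cases G with
  | nil => exact hG.resolve_left (by simp)
  | cons => exact h

/-- The one rule that does not survive prefixing is `■R2` at the root; it is replaced by `■R1`,
whose extra premise `P ⇒ □A, N, B` comes from moving `P ⇒ □A, N` into the past component. -/
lemma prefixed_bboxR2_root {Φ Ψ : Finset LNS} {Γ Δ : Multiset Formula} {B : Formula}
    (hΨ : Covered A Ψ a b) (hmem : .single Γ (B.bbox ::ₘ Δ) ∈ Φ)
    (ih : Liftable A Φ Ψ a b (.dn Γ (B.bbox ::ₘ Δ) (.single 0 {B}))) :
    Prefixed A a b (.single Γ (B.bbox ::ₘ Δ)) := by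
  by_cases hΨS : .single Γ (B.bbox ::ₘ Δ) ∈ Ψ
  · exact hΨ _ hΨS
  intro P N
  have hB : Deriv (.single (a + P) (B ::ₘ A.box ::ₘ (b + N))) := by
    rw [Multiset.cons_swap]
    simpa [LNS.addHead] using ih.2 _ _ _ rfl (Finset.mem_sdiff.2 ⟨hmem, hΨS⟩) P N
  exact Deriv.bboxR1 [] _ _ _ _ B (Deriv.ew [] _ _ .up _ _ hB) (ih.1 P N)

lemma HeadWeakened.boxR2 {Θ Λ : Multiset Formula} {B : Formula}
    (h : HeadWeakened A a b (.up Θ (B.box ::ₘ Λ) (.single 0 {B}))) :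
    HeadWeakened A a b (.single Θ (B.box ::ₘ Λ)) := fun M N => by
  have := Deriv.boxR2 [] (Θ + (a + M)) (Λ + A.box ::ₘ (b + N)) B (by simp [lastDir])
    (by simpa [LNS.addHead, plug, Multiset.cons_swap] using h M N)
  simpa [LNS.addHead, plug, Multiset.cons_swap] using this

lemma headWeakened_ew_root {Θ Λ Γ Δ : Multiset Formula} (hΘΛ : Prefixed A a b (.single Θ Λ))
    (restart : Restartable A a b (.single Θ Λ)) :
    HeadWeakened A a b (.single Γ Δ) := fun M N => by
  have hA := (restart 0 0 (by simpa using hΘΛ)).deriv_box (Γ + M) (Δ + N)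
  simpa [LNS.addHead, ← Multiset.singleton_add, add_comm, add_left_comm, add_assoc] using hA

lemma headWeakened_boxL2_root {Γ Δ Θ Λ : Multiset Formula} {B : Formula}
    (hB : Prefixed A a b (.single (B ::ₘ Γ) Δ))
    (restart : Restartable A a b (.single Γ Δ)) :
    HeadWeakened A a b (.single (B.box ::ₘ Θ) Λ) := fun M N => by
  have hΓΔ : Prefixed A (a + {B.box}) (b + 0) (.single Γ Δ) := fun P N' => by
    have := Deriv.boxL1 [] (a + P) _ Γ Δ B
      (by simpa [Multiset.add_cons, plug] using hB (B.box ::ₘ P) N')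
    simpa [plug, ← Multiset.singleton_add, add_comm, add_left_comm, add_assoc] using this
  have hA := (restart _ _ hΓΔ).deriv_box (Θ + M) (Λ + N)
  simpa [LNS.addHead, ← Multiset.singleton_add, add_comm, add_left_comm, add_assoc] using hA

lemma headWeakened_bboxL1_root {Γ Δ Θ Λ : Multiset Formula} {B : Formula}
    (hB : HeadWeakened A a b (.single (B ::ₘ Θ) Λ))
    (restart : Restartable A a b (.single (B.bbox ::ₘ Γ) Δ)) :
    HeadWeakened A a b (.single Θ Λ) := fun M N => by
  have hΓΔ : Prefixed A (a + Θ) (b + Λ) (.single (B.bbox ::ₘ Γ) Δ) := fun P N' => by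
    refine Deriv.bboxL2 [] _ _ Γ Δ B ?_
    simpa [LNS.addHead, plug, ← Multiset.singleton_add, add_comm, add_left_comm, add_assoc]
      using hB P N'
  have hA := (restart _ _ hΓΔ).deriv_box M N
  simpa [LNS.addHead, ← Multiset.singleton_add, add_comm, add_left_comm, add_assoc] using hA

lemma headWeakened_of_root_rule {Φ Ψ : Finset LNS} {C K : LNS} {Ps : List LNS}
    {Γ Δ : Multiset Formula} (h : Rule none C Ps) (hC : C = .dn Γ Δ K)
    (restart : Restartable A a b (.single Γ Δ))
    (hanc : LNS.single Γ Δ ∈ Φ \ Ψ) (ih : ∀ P ∈ Ps, Liftable A Φ Ψ a b P) :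
    HeadWeakened A a b K := by
  cases h with
  | ew Θ Λ e Γ' Δ' =>
      cases e <;> cases hC
      exact headWeakened_ew_root (ih _ (by simp)).1 restart
  | boxR1 => cases hC; exact ((ih _ (by simp)).2 _ _ _ rfl hanc).boxR2
  | bboxL1 =>
      cases hC
      exact headWeakened_bboxL1_root ((ih _ (by simp)).2 _ _ _ rfl hanc) restart
  | boxL2 => cases hC; exact headWeakened_boxL2_root (ih _ (by simp)).1 restart
  | _ => cases hC

theorem liftable_of_derivIn {Φ Ψ : Finset LNS} {W : LNS} (hΨ : Covered A Ψ a b)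
    (restart : ∀ S ∈ Φ \ Ψ, Restartable A a b S)
    (hW : DerivIn Φ W) : Liftable A Φ Ψ a b W := by
  induction hW with
  | @rule G C Ps hrule _ hmem ih =>
    refine ⟨?_, fun Γ Δ K hK hanc => ?_⟩
    · rcases eq_or_ne G [] with rfl | hG
      · rcases hrule.some_up_or_bboxR2 with hup | ⟨Γ, Δ, B, rfl, rfl⟩
        · exact prefixed_of_rule hrule (.inr hup) fun P hP => (ih P hP).1
        · exact prefixed_bboxR2_root hΨ hmem (ih _ (List.mem_singleton_self _))
      · exact prefixed_of_rule hrule (.inl hG) fun P hP => (ih P hP).1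
    · cases G with
      | nil => exact headWeakened_of_root_rule hrule hK (restart _ hanc) hanc ih
      | cons c G =>
          obtain ⟨rfl, rfl⟩ := plug_cons_eq_dn hK
          exact fun M N => Deriv.addHead_of_rule hrule fun P hP =>
            (ih P hP).2 Γ Δ _ rfl hanc M N

theorem prefixed_of_derivIn {Φ Ψ : Finset LNS} {a b : Multiset Formula}
    (hA : DerivIn Φ (.single 0 {A})) (hΨ : Covered A Ψ a b) : Prefixed A a b (.single 0 {A}) :=
  (liftable_of_derivIn hΨ (fun S hS x y hSxy =>
    have : (Φ \ insert S Ψ).card < (Φ \ Ψ).card := by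
      rw [Finset.sdiff_insert]
      exact Finset.card_erase_lt_of_mem hS
    prefixed_of_derivIn hA ((hΨ.mono x y).insert hSxy)) hA).1
termination_by (Φ \ Ψ).card

theorem Deriv.box (h : Deriv (.single 0 {A})) : Deriv (.single 0 {A.box}) := by
  obtain ⟨Φ, hΦ⟩ := h.exists_derivIn
  have hA := prefixed_of_derivIn (Ψ := ∅) (a := 0) (b := 0) hΦ (by simp [Covered])
  simpa using hA.deriv_box 0 0

end Necessitation

/-- Admissibility of necessitation in LNS_Kt: if `ε ⇒ A` is derivable, then so
are `ε ⇒ □A` and `ε ⇒ ■A`. -/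
theorem necessitation_admissible (A : Formula) (h : Deriv (LNS.single 0 {A})) :
    Deriv (LNS.single 0 {Formula.box A}) ∧ Deriv (LNS.single 0 {Formula.bbox A}) := by
  refine ⟨h.box, ?_⟩
  have hswap : Deriv (.single 0 {A.swap}) := by simpa [LNS.swap] using h.swap
  simpa [LNS.swap, Formula.swap] using hswap.box.swap
end

section
/- (Derivability of the interaction axioms in LNS_Kt) Writing ¬X for X → ⊥, for every atomic formula p the linear nested sequents ε ⇒ ¬□¬■p → p and ε ⇒ ¬■¬□p → p (the axioms ◇■p → p and ◆□p → p with the diamonds expanded via ◇X = ¬□¬X and ◆X = ¬■¬X) are derivable in LNS_Kt. -/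
/-!
Both axioms come down to the sequent forms of `A → □◆A` and `A → ■◇A`: in the context
`Γ ⇒ Δ, □¬■A`, opening the `□` creates a successor containing `■A` on the left, and `■_L^2`
sends `A` back to the parent component. With `A = p`, this `p` closes the sequent
`¬□¬■p ⇒ p` obtained by `→_R`, once `→_L` has turned `¬□¬■p` into the succedent `□¬■p`.
-/

theorem plug_append_singleton (G : Ctx) (Γ Δ : Multiset Formula) (d : Dir) (S : LNS) :
    plug (G ++ [(Γ, Δ, d)]) S = plug G (plug [(Γ, Δ, d)] S) := by
  induction G with
  | nil => rfl
  | cons c G ih =>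
    obtain ⟨Θ, Λ, e⟩ := c
    cases e <;> simp only [List.cons_append, plug, ih]

namespace Deriv

theorem negL {G : Ctx} {Γ Δ : Multiset Formula} {A : Formula}
    (h : Deriv (plug G (.single (A.neg ::ₘ Γ) (A ::ₘ Δ)))) :
    Deriv (plug G (.single (A.neg ::ₘ Γ) Δ)) :=
  impL G Γ Δ A .bot (botL G _ _) h

theorem drop_left_of_box_neg_bbox {G : Ctx} (hG : lastDir G ≠ some Dir.dn)
    {Γ Δ : Multiset Formula} {A : Formula}
    (h : Deriv (plug G (.single (A ::ₘ Γ) (A.bbox.neg.box ::ₘ Δ)))) :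
    Deriv (plug G (.single Γ (A.bbox.neg.box ::ₘ Δ))) := by
  refine boxR2 G Γ Δ _ hG ?_
  have hsucc := impR (G ++ [(Γ, A.bbox.neg.box ::ₘ Δ, Dir.up)]) 0 0 A.bbox .bot
  simp only [plug_append_singleton, plug] at hsucc
  exact hsucc (bboxL2 G Γ _ 0 _ A h)

theorem drop_left_of_bbox_neg_box {G : Ctx} (hG : lastDir G ≠ some Dir.up)
    {Γ Δ : Multiset Formula} {A : Formula}
    (h : Deriv (plug G (.single (A ::ₘ Γ) (A.box.neg.bbox ::ₘ Δ)))) :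
    Deriv (plug G (.single Γ (A.box.neg.bbox ::ₘ Δ))) := by
  refine bboxR2 G Γ Δ _ hG ?_
  have hsucc := impR (G ++ [(Γ, A.box.neg.bbox ::ₘ Δ, Dir.dn)]) 0 0 A.box .bot
  simp only [plug_append_singleton, plug] at hsucc
  exact hsucc (boxL2 G Γ _ 0 _ A h)

theorem neg_box_neg_bbox_imp {G : Ctx} (hG : lastDir G ≠ some Dir.dn)
    (Γ Δ : Multiset Formula) (p : ℕ) :
    Deriv (plug G (.single Γ
      ((Formula.atom p).bbox.neg.box.neg.imp (.atom p) ::ₘ Δ))) := by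
  refine impR G Γ Δ _ _ (negL (drop_left_of_box_neg_bbox hG ?_))
  rw [Multiset.cons_swap _ (Formula.atom p)]
  exact Deriv.id G _ _ p

theorem neg_bbox_neg_box_imp {G : Ctx} (hG : lastDir G ≠ some Dir.up)
    (Γ Δ : Multiset Formula) (p : ℕ) :
    Deriv (plug G (.single Γ
      ((Formula.atom p).box.neg.bbox.neg.imp (.atom p) ::ₘ Δ))) := by
  refine impR G Γ Δ _ _ (negL (drop_left_of_bbox_neg_box hG ?_))
  rw [Multiset.cons_swap _ (Formula.atom p)]
  exact Deriv.id G _ _ p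

end Deriv

/-- Derivability of the interaction axioms ◇■p → p and ◆□p → p (with the
diamonds expanded as ◇X = ¬□¬X and ◆X = ¬■¬X) in LNS_Kt. -/
theorem interaction_axioms (p : ℕ) :
    Deriv (LNS.single 0
      {Formula.imp (Formula.neg (Formula.box (Formula.neg (Formula.bbox (.atom p)))))
        (.atom p)}) ∧
    Deriv (LNS.single 0
      {Formula.imp (Formula.neg (Formula.bbox (Formula.neg (Formula.box (.atom p)))))
        (.atom p)}) :=
  ⟨Deriv.neg_box_neg_bbox_imp (G := []) nofun 0 0 p,
    Deriv.neg_bbox_neg_box_imp (G := []) nofun 0 0 p⟩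
end

section
/- (Soundness of LNS_KB) For every linear nested sequent S over the mono-modal language, if S is derivable in the calculus LNS_KB, then for every Kripke model ⟨W,R,V⟩ with R symmetric and every world w ∈ W, w forces the formula translation τ(S). -/
/-- Mono-modal formulae: atoms, ⊥, →, □, ◇. -/
inductive KFormula : Type
  | atom : ℕ → KFormula
  | bot : KFormula
  | imp : KFormula → KFormula → KFormula
  | box : KFormula → KFormula
  | dia : KFormula → KFormula

def KFormula.neg (A : KFormula) : KFormula := A.imp .bot
def KFormula.and (A B : KFormula) : KFormula := (A.imp B.neg).neg
def KFormula.or (A B : KFormula) : KFormula := A.neg.imp B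
def KFormula.top : KFormula := KFormula.bot.imp .bot

/-- Mono-modal formulae built from atoms, ⊥, →, □ only. -/
def KFormula.NoDia : KFormula → Prop
  | .atom _ => True
  | .bot => True
  | .imp A B => A.NoDia ∧ B.NoDia
  | .box A => A.NoDia
  | .dia _ => False

/-- Linear nested sequents for KB: components joined by ↗ only. -/
inductive KLNS : Type
  | single (Γ Δ : Multiset KFormula) : KLNS
  | up (Γ Δ : Multiset KFormula) (S : KLNS) : KLNS

/-- A (possibly empty) context for KB sequents. -/
abbrev KCtx := List (Multiset KFormula × Multiset KFormula)

def plugK : KCtx → KLNS → KLNS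
  | [], S => S
  | (Γ, Δ) :: G, S => KLNS.up Γ Δ (plugK G S)

/-- Kripke forcing for mono-modal logic. -/
def KForce {W : Type} (R : W → W → Prop) (V : W → ℕ → Prop) : W → KFormula → Prop
  | w, .atom p => V w p
  | _, .bot => False
  | w, .imp A B => KForce R V w A → KForce R V w B
  | w, .box A => ∀ v, R w v → KForce R V v A
  | w, .dia A => ∃ v, R w v ∧ KForce R V v A

noncomputable def bigAndK (Γ : Multiset KFormula) : KFormula :=
  Γ.toList.foldr KFormula.and KFormula.top

noncomputable def bigOrK (Δ : Multiset KFormula) : KFormula :=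
  Δ.toList.foldr KFormula.or KFormula.bot

/-- The formula translation τ of a linear nested sequent for KB. -/
noncomputable def tauK : KLNS → KFormula
  | .single Γ Δ => (bigAndK Γ).imp (bigOrK Δ)
  | .up Γ Δ S => (bigAndK Γ).imp ((bigOrK Δ).or (tauK S).box)

/-- The calculus LNS_KB. -/
inductive DerivKB : KLNS → Prop
  | id (G : KCtx) (Γ Δ : Multiset KFormula) (p : ℕ) :
      DerivKB (plugK G (.single (.atom p ::ₘ Γ) (.atom p ::ₘ Δ)))
  | botL (G : KCtx) (Γ Δ : Multiset KFormula) :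
      DerivKB (plugK G (.single (.bot ::ₘ Γ) Δ))
  | ew (G : KCtx) (Θ Λ : Multiset KFormula) (Γ Δ : Multiset KFormula) :
      DerivKB (plugK G (.single Θ Λ)) →
      DerivKB (plugK (G ++ [(Θ, Λ)]) (.single Γ Δ))
  | impR (G : KCtx) (Γ Δ : Multiset KFormula) (A B : KFormula) :
      DerivKB (plugK G (.single (A ::ₘ Γ) (B ::ₘ A.imp B ::ₘ Δ))) →
      DerivKB (plugK G (.single Γ (A.imp B ::ₘ Δ)))
  | impL (G : KCtx) (Γ Δ : Multiset KFormula) (A B : KFormula) :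
      DerivKB (plugK G (.single (B ::ₘ A.imp B ::ₘ Γ) Δ)) →
      DerivKB (plugK G (.single (A.imp B ::ₘ Γ) (A ::ₘ Δ))) →
      DerivKB (plugK G (.single (A.imp B ::ₘ Γ) Δ))
  | boxR (G : KCtx) (Γ Δ : Multiset KFormula) (A : KFormula) :
      DerivKB (plugK G (.up Γ (A.box ::ₘ Δ) (.single 0 {A}))) →
      DerivKB (plugK G (.single Γ (A.box ::ₘ Δ)))
  | boxL1 (G : KCtx) (Γ Δ Θ Λ : Multiset KFormula) (A : KFormula) :
      DerivKB (plugK G (.up (A.box ::ₘ Γ) Δ (.single (A ::ₘ Θ) Λ))) →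
      DerivKB (plugK G (.up (A.box ::ₘ Γ) Δ (.single Θ Λ)))
  | boxL2 (G : KCtx) (Γ Δ Θ Λ : Multiset KFormula) (A : KFormula) :
      DerivKB (plugK G (.single (A ::ₘ Γ) Δ)) →
      DerivKB (plugK G (.up Γ Δ (.single (A.box ::ₘ Θ) Λ)))

/-!
Each rule of LNS_KB is sound locally: if the translations of its premises' last components hold
at a world, so does the translation of the conclusion's. Since the context `G` sits under `→`, `∨`
and `□` in positive position only, such local implications lift through `plugK G`. The only rule
that needs symmetry is `(□_L^2)`: a box `□A` forced at a successor `v` of `w` yields `A` at `w`,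
because `w` is a successor of `v`.
-/

section Soundness

variable {W : Type} {R : W → W → Prop} {V : W → ℕ → Prop}

lemma kforce_and {w : W} {A B : KFormula} :
    KForce R V w (A.and B) ↔ KForce R V w A ∧ KForce R V w B := by
  simp only [KFormula.and, KFormula.neg, KForce]
  tauto

lemma kforce_or {w : W} {A B : KFormula} :
    KForce R V w (A.or B) ↔ KForce R V w A ∨ KForce R V w B := by
  simp only [KFormula.or, KFormula.neg, KForce]
  tauto

lemma kforce_bigAndK {w : W} {Γ : Multiset KFormula} :
    KForce R V w (bigAndK Γ) ↔ ∀ A ∈ Γ, KForce R V w A := by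
  suffices h : ∀ l : List KFormula,
      KForce R V w (l.foldr KFormula.and KFormula.top) ↔ ∀ A ∈ l, KForce R V w A by
    simp [bigAndK, h]
  intro l
  induction l with
  | nil => simp [KFormula.top, KForce]
  | cons a l ih => simp [kforce_and, ih]

lemma kforce_bigOrK {w : W} {Δ : Multiset KFormula} :
    KForce R V w (bigOrK Δ) ↔ ∃ A ∈ Δ, KForce R V w A := by
  suffices h : ∀ l : List KFormula,
      KForce R V w (l.foldr KFormula.or KFormula.bot) ↔ ∃ A ∈ l, KForce R V w A by
    simp [bigOrK, h]
  intro l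
  induction l with
  | nil => simp [KForce]
  | cons a l ih => simp [kforce_or, ih]

lemma kforce_tauK_single {w : W} {Γ Δ : Multiset KFormula} :
    KForce R V w (tauK (.single Γ Δ)) ↔
      ((∀ A ∈ Γ, KForce R V w A) → ∃ A ∈ Δ, KForce R V w A) := by
  simp only [tauK, KForce, kforce_bigAndK, kforce_bigOrK]

lemma kforce_tauK_up {w : W} {Γ Δ : Multiset KFormula} {S : KLNS} :
    KForce R V w (tauK (.up Γ Δ S)) ↔
      ((∀ A ∈ Γ, KForce R V w A) →
        (∃ A ∈ Δ, KForce R V w A) ∨ ∀ v, R w v → KForce R V v (tauK S)) := by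
  simp only [tauK, KForce, kforce_bigAndK, kforce_bigOrK, kforce_or]

lemma kforce_tauK_plugK_of_forall (G : KCtx) {S : KLNS} (h : ∀ w, KForce R V w (tauK S))
    (w : W) : KForce R V w (tauK (plugK G S)) := by
  induction G generalizing w with
  | nil => exact h w
  | cons c G ih => exact kforce_tauK_up.2 fun _ => .inr fun v _ => ih v

lemma kforce_tauK_plugK_mono (G : KCtx) {S T : KLNS}
    (h : ∀ w, KForce R V w (tauK S) → KForce R V w (tauK T)) (w : W) :
    KForce R V w (tauK (plugK G S)) → KForce R V w (tauK (plugK G T)) := by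
  induction G generalizing w with
  | nil => exact h w
  | cons c G ih =>
    simp only [plugK, kforce_tauK_up]
    exact fun hS hΓ => (hS hΓ).imp_right fun hbox v hv => ih v (hbox v hv)

lemma kforce_tauK_plugK_mono₂ (G : KCtx) {S₁ S₂ T : KLNS}
    (h : ∀ w, KForce R V w (tauK S₁) → KForce R V w (tauK S₂) → KForce R V w (tauK T)) (w : W) :
    KForce R V w (tauK (plugK G S₁)) → KForce R V w (tauK (plugK G S₂)) →
      KForce R V w (tauK (plugK G T)) := by
  induction G generalizing w with
  | nil => exact h w
  | cons c G ih =>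
    simp only [plugK, kforce_tauK_up]
    intro h₁ h₂ hΓ
    rcases h₁ hΓ with hΔ | hbox₁
    · exact .inl hΔ
    rcases h₂ hΓ with hΔ | hbox₂
    · exact .inl hΔ
    exact .inr fun v hv => ih v (hbox₁ v hv) (hbox₂ v hv)

lemma plugK_append_singleton (G : KCtx) (Γ Δ : Multiset KFormula) (S : KLNS) :
    plugK (G ++ [(Γ, Δ)]) S = plugK G (.up Γ Δ S) := by
  induction G with
  | nil => rfl
  | cons c G ih => simp [plugK, ih]

variable {w : W}

lemma kforce_tauK_id (Γ Δ : Multiset KFormula) (p : ℕ) :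
    KForce R V w (tauK (.single (.atom p ::ₘ Γ) (.atom p ::ₘ Δ))) :=
  kforce_tauK_single.2 fun hΓ =>
    ⟨_, Multiset.mem_cons_self _ _, hΓ _ (Multiset.mem_cons_self _ _)⟩

lemma kforce_tauK_botL (Γ Δ : Multiset KFormula) :
    KForce R V w (tauK (.single (.bot ::ₘ Γ) Δ)) :=
  kforce_tauK_single.2 fun hΓ => (hΓ .bot (Multiset.mem_cons_self _ _)).elim

lemma kforce_tauK_ew {Γ Δ : Multiset KFormula} {S : KLNS}
    (h : KForce R V w (tauK (.single Γ Δ))) : KForce R V w (tauK (.up Γ Δ S)) :=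
  kforce_tauK_up.2 fun hΓ => .inl (kforce_tauK_single.1 h hΓ)

lemma kforce_tauK_impR {Γ Δ : Multiset KFormula} {A B : KFormula}
    (h : KForce R V w (tauK (.single (A ::ₘ Γ) (B ::ₘ A.imp B ::ₘ Δ)))) :
    KForce R V w (tauK (.single Γ (A.imp B ::ₘ Δ))) := by
  rw [kforce_tauK_single] at h ⊢
  intro hΓ
  by_cases hA : KForce R V w A
  · obtain ⟨C, hC, hwC⟩ := h (Multiset.forall_mem_cons.2 ⟨hA, hΓ⟩)
    rcases Multiset.mem_cons.1 hC with rfl | hC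
    · exact ⟨_, Multiset.mem_cons_self _ _, fun _ => hwC⟩
    · exact ⟨C, hC, hwC⟩
  · exact ⟨_, Multiset.mem_cons_self _ _, fun hA' => (hA hA').elim⟩

lemma kforce_tauK_impL {Γ Δ : Multiset KFormula} {A B : KFormula}
    (h₁ : KForce R V w (tauK (.single (B ::ₘ A.imp B ::ₘ Γ) Δ)))
    (h₂ : KForce R V w (tauK (.single (A.imp B ::ₘ Γ) (A ::ₘ Δ)))) :
    KForce R V w (tauK (.single (A.imp B ::ₘ Γ) Δ)) := by
  rw [kforce_tauK_single] at h₁ h₂ ⊢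
  intro hΓ
  obtain ⟨C, hC, hwC⟩ := h₂ hΓ
  rcases Multiset.mem_cons.1 hC with rfl | hC
  · exact h₁ (Multiset.forall_mem_cons.2 ⟨hΓ _ (Multiset.mem_cons_self _ _) hwC, hΓ⟩)
  · exact ⟨C, hC, hwC⟩

lemma kforce_tauK_boxR {Γ Δ : Multiset KFormula} {A : KFormula}
    (h : KForce R V w (tauK (.up Γ (A.box ::ₘ Δ) (.single 0 {A})))) :
    KForce R V w (tauK (.single Γ (A.box ::ₘ Δ))) := by
  rw [kforce_tauK_up] at h
  refine kforce_tauK_single.2 fun hΓ => (h hΓ).elim id fun hbox => ?_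
  refine ⟨A.box, Multiset.mem_cons_self _ _, fun v hv => ?_⟩
  obtain ⟨C, hC, hvC⟩ := kforce_tauK_single.1 (hbox v hv) (by simp)
  exact Multiset.mem_singleton.1 hC ▸ hvC

lemma kforce_tauK_boxL1 {Γ Δ Θ Λ : Multiset KFormula} {A : KFormula}
    (h : KForce R V w (tauK (.up (A.box ::ₘ Γ) Δ (.single (A ::ₘ Θ) Λ)))) :
    KForce R V w (tauK (.up (A.box ::ₘ Γ) Δ (.single Θ Λ))) := by
  rw [kforce_tauK_up] at h ⊢
  refine fun hΓ => (h hΓ).imp_right fun hbox v hv => kforce_tauK_single.2 fun hΘ => ?_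
  have hvA : KForce R V v A := hΓ A.box (Multiset.mem_cons_self _ _) v hv
  exact kforce_tauK_single.1 (hbox v hv) (Multiset.forall_mem_cons.2 ⟨hvA, hΘ⟩)

lemma kforce_tauK_boxL2 [Std.Symm R] {Γ Δ Θ Λ : Multiset KFormula} {A : KFormula}
    (h : KForce R V w (tauK (.single (A ::ₘ Γ) Δ))) :
    KForce R V w (tauK (.up Γ Δ (.single (A.box ::ₘ Θ) Λ))) := by
  rw [kforce_tauK_single] at h
  rw [kforce_tauK_up]
  intro hΓ
  refine or_iff_not_imp_left.2 fun hΔ v hv => kforce_tauK_single.2 fun hΘ => ?_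
  have hwA : KForce R V w A := hΘ A.box (Multiset.mem_cons_self _ _) w (Std.Symm.symm _ _ hv)
  exact (hΔ (h (Multiset.forall_mem_cons.2 ⟨hwA, hΓ⟩))).elim

theorem DerivKB.kforce_tauK {S : KLNS} [Std.Symm R] (hS : DerivKB S) (w : W) :
    KForce R V w (tauK S) := by
  induction hS generalizing w with
  | id G Γ Δ p => exact kforce_tauK_plugK_of_forall G (fun _ => kforce_tauK_id Γ Δ p) w
  | botL G Γ Δ => exact kforce_tauK_plugK_of_forall G (fun _ => kforce_tauK_botL Γ Δ) w
  | ew G Θ Λ Γ Δ _ ih =>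
    rw [plugK_append_singleton]
    exact kforce_tauK_plugK_mono G (fun _ => kforce_tauK_ew) w (ih w)
  | impR G Γ Δ A B _ ih => exact kforce_tauK_plugK_mono G (fun _ => kforce_tauK_impR) w (ih w)
  | impL G Γ Δ A B _ _ ih₁ ih₂ =>
    exact kforce_tauK_plugK_mono₂ G (fun _ => kforce_tauK_impL) w (ih₁ w) (ih₂ w)
  | boxR G Γ Δ A _ ih => exact kforce_tauK_plugK_mono G (fun _ => kforce_tauK_boxR) w (ih w)
  | boxL1 G Γ Δ Θ Λ A _ ih =>
    exact kforce_tauK_plugK_mono G (fun _ => kforce_tauK_boxL1) w (ih w)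
  | boxL2 G Γ Δ Θ Λ A _ ih =>
    exact kforce_tauK_plugK_mono G (fun _ => kforce_tauK_boxL2) w (ih w)

end Soundness

/-- Soundness of LNS_KB: every derivable sequent has a formula translation
forced at every world of every Kripke model with symmetric accessibility. -/
theorem lnskb_sound (S : KLNS) (h : DerivKB S) :
    ∀ (W : Type) (_ : Nonempty W) (R : W → W → Prop),
      (∀ x y, R x y → R y x) →
        ∀ (V : W → ℕ → Prop) (w : W), KForce R V w (tauK S) :=
  fun _ _ R hR _ w =>
    have : Std.Symm R := ⟨hR⟩
    h.kforce_tauK w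
end

section
/- (Completeness of LNS_KB) For every mono-modal formula φ built from atoms, ⊥, →, □: if φ is forced at every world of every Kripke model ⟨W,R,V⟩ with R symmetric, then the linear nested sequent ε ⇒ φ is derivable in LNS_KB. -/
/-! Completeness is proved by a terminating proof search that turns an underivable sequent
into a countermodel. Read backwards, every rule of LNS_KB keeps some premise underivable
("consistent"), and premises only add formulas, all of them subformulas of φ. The last component
is saturated under the propositional rules; for each □A in its succedent a child component
`□⁻¹Γ ⇒ A` is searched one level deeper. If a child acquires □B in its antecedent with B missing
from the parent, rule □_L^2 lets the parent restart with B added: this is what makes the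
accessibility relation symmetric. A component whose support repeats that of an ancestor is
identified with it, which bounds the depth by the number of possible supports, so the search
terminates (lexicographically in depth and size). The saturated components form a symmetric
Kripke model in which each of them refutes its own sequent. -/

namespace LNSKB

open KFormula

noncomputable instance : DecidableEq KFormula := Classical.decEq _

noncomputable def subformulas : KFormula → Finset KFormula
  | .atom p => {.atom p}
  | .bot => {.bot}
  | .imp A B => insert (A.imp B) (subformulas A ∪ subformulas B)
  | .box A => insert A.box (subformulas A)
  | .dia A => insert A.dia (subformulas A)

lemma mem_subformulas_self (A : KFormula) : A ∈ subformulas A := by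
  cases A <;> simp [subformulas]

lemma subformulas_subset_of_mem {A B : KFormula} (h : B ∈ subformulas A) :
    subformulas B ⊆ subformulas A := by
  induction A with
  | atom p | bot => simp_all [subformulas]
  | imp A₁ A₂ ih₁ ih₂ =>
    simp only [subformulas, Finset.mem_insert, Finset.mem_union] at h
    rcases h with rfl | h | h
    · rfl
    · exact (ih₁ h).trans (Finset.subset_union_left.trans (Finset.subset_insert _ _))
    · exact (ih₂ h).trans (Finset.subset_union_right.trans (Finset.subset_insert _ _))
  | box A ih | dia A ih =>
    simp only [subformulas, Finset.mem_insert] at h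
    rcases h with rfl | h
    · rfl
    · exact (ih h).trans (Finset.subset_insert _ _)

structure SubformulaClosed (u : Finset KFormula) : Prop where
  imp_mem : ∀ {A B}, A.imp B ∈ u → A ∈ u ∧ B ∈ u
  box_mem : ∀ {A}, A.box ∈ u → A ∈ u

lemma subformulaClosed_subformulas (φ : KFormula) : SubformulaClosed (subformulas φ) where
  imp_mem h := by
    have := subformulas_subset_of_mem h
    exact ⟨this (by simp [subformulas, mem_subformulas_self]),
      this (by simp [subformulas, mem_subformulas_self])⟩
  box_mem h := subformulas_subset_of_mem h (by simp [subformulas, mem_subformulas_self])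

lemma plugK_concat (G : KCtx) (Γ Δ : Multiset KFormula) (S : KLNS) :
    plugK (G ++ [(Γ, Δ)]) S = plugK G (.up Γ Δ S) := by
  induction G with
  | nil => rfl
  | cons c G ih => simp [plugK, ih]

def Consistent (anc : KCtx) (Γ Δ : Multiset KFormula) : Prop :=
  ¬ DerivKB (plugK anc (.single Γ Δ))

namespace Consistent

variable {anc : KCtx} {Γ Δ Θ Λ : Multiset KFormula} {A B : KFormula}

lemma atom_not_mem (h : Consistent anc Γ Δ) {p : ℕ} (hΓ : atom p ∈ Γ) : atom p ∉ Δ := by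
  intro hΔ
  obtain ⟨Γ, rfl⟩ := Multiset.exists_cons_of_mem hΓ
  obtain ⟨Δ, rfl⟩ := Multiset.exists_cons_of_mem hΔ
  exact h (DerivKB.id anc Γ Δ p)

lemma bot_not_mem (h : Consistent anc Γ Δ) : bot ∉ Γ := by
  intro hΓ
  obtain ⟨Γ, rfl⟩ := Multiset.exists_cons_of_mem hΓ
  exact h (DerivKB.botL anc Γ Δ)

lemma impL (h : Consistent anc Γ Δ) (hm : A.imp B ∈ Γ) :
    Consistent anc (B ::ₘ Γ) Δ ∨ Consistent anc Γ (A ::ₘ Δ) := by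
  obtain ⟨Γ, rfl⟩ := Multiset.exists_cons_of_mem hm
  exact not_and_or.mp fun ⟨hB, hA⟩ => h (DerivKB.impL anc Γ Δ A B hB hA)

lemma impR (h : Consistent anc Γ Δ) (hm : A.imp B ∈ Δ) :
    Consistent anc (A ::ₘ Γ) (B ::ₘ Δ) := by
  obtain ⟨Δ, rfl⟩ := Multiset.exists_cons_of_mem hm
  exact fun hd => h (DerivKB.impR anc Γ Δ A B hd)

lemma boxR (h : Consistent anc Γ Δ) (hm : A.box ∈ Δ) :
    Consistent (anc ++ [(Γ, Δ)]) 0 {A} := by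
  obtain ⟨Δ, rfl⟩ := Multiset.exists_cons_of_mem hm
  rw [Consistent, plugK_concat]
  exact fun hd => h (DerivKB.boxR anc Γ Δ A hd)

lemma boxL1 (h : Consistent (anc ++ [(Γ, Δ)]) Θ Λ) (hm : A.box ∈ Γ) :
    Consistent (anc ++ [(Γ, Δ)]) (A ::ₘ Θ) Λ := by
  obtain ⟨Γ, rfl⟩ := Multiset.exists_cons_of_mem hm
  rw [Consistent, plugK_concat] at h ⊢
  exact fun hd => h (DerivKB.boxL1 anc Γ Δ Θ Λ A hd)

lemma boxL2 (h : Consistent (anc ++ [(Γ, Δ)]) Θ Λ) (hm : A.box ∈ Θ) :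
    Consistent anc (A ::ₘ Γ) Δ := by
  obtain ⟨Θ, rfl⟩ := Multiset.exists_cons_of_mem hm
  rw [Consistent, plugK_concat] at h
  exact fun hd => h (DerivKB.boxL2 anc Γ Δ Θ Λ A hd)

end Consistent

abbrev Component := Multiset KFormula × Multiset KFormula

def Accessible (q q' : Component) : Prop :=
  (∀ A, A.box ∈ q.1 → A ∈ q'.1) ∧ (∀ A, A.box ∈ q'.1 → A ∈ q.1)

lemma Accessible.symm {q q' : Component} (h : Accessible q q') : Accessible q' q := ⟨h.2, h.1⟩

def PropSaturated (q : Component) : Prop :=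
  (∀ A B, A.imp B ∈ q.1 → A ∈ q.2 ∨ B ∈ q.1) ∧ (∀ A B, A.imp B ∈ q.2 → A ∈ q.1 ∧ B ∈ q.2)

structure Saturated (V : Set Component) (q : Component) : Prop where
  propSaturated : PropSaturated q
  bot_not_mem : bot ∉ q.1
  atom_not_mem : ∀ p, atom p ∈ q.1 → atom p ∉ q.2
  exists_box_witness : ∀ A, A.box ∈ q.2 → ∃ q' ∈ V, Accessible q q' ∧ A ∈ q'.2

lemma Saturated.mono {V V' : Set Component} {q : Component} (h : Saturated V q) (hV : V ⊆ V') :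
    Saturated V' q where
  __ := h
  exists_box_witness A hA :=
    let ⟨q', hq', hacc, hA'⟩ := h.exists_box_witness A hA
    ⟨q', hV hq', hacc, hA'⟩

def CanonicalForce (W : Set Component) : W → KFormula → Prop :=
  KForce (fun a b => Accessible a.1 b.1) (fun a p => atom p ∈ a.1.1)

lemma truth_lemma {W : Set Component} (hW : ∀ q ∈ W, Saturated W q)
    {A : KFormula} (hA : A.NoDia) (q : W) :
    (A ∈ q.1.1 → CanonicalForce W q A) ∧ (A ∈ q.1.2 → ¬ CanonicalForce W q A) := by
  have hq := hW q.1 q.2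
  induction A generalizing q with
  | atom p => exact ⟨id, fun h hf => hq.atom_not_mem p hf h⟩
  | bot => exact ⟨fun h => absurd h hq.bot_not_mem, fun _ hf => hf⟩
  | imp A B ihA ihB =>
    refine ⟨fun h hfA => ?_, fun h hf => ?_⟩
    · rcases hq.propSaturated.1 A B h with h' | h'
      · exact absurd hfA ((ihA hA.1 q hq).2 h')
      · exact (ihB hA.2 q hq).1 h'
    · obtain ⟨h₁, h₂⟩ := hq.propSaturated.2 A B h
      exact (ihB hA.2 q hq).2 h₂ (hf ((ihA hA.1 q hq).1 h₁))
  | box A ih =>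
    refine ⟨fun h v hqv => (ih hA v (hW v.1 v.2)).1 (hqv.1 A h), fun h hf => ?_⟩
    obtain ⟨q', hq', hacc, hA'⟩ := hq.exists_box_witness A h
    exact (ih hA ⟨q', hq'⟩ (hW q' hq')).2 hA' (hf ⟨q', hq'⟩ hacc)
  | dia A => exact absurd hA id

section Search

variable {u : Finset KFormula} {anc : KCtx} {Γ Δ : Multiset KFormula}

structure GrowsWithin (u : Finset KFormula) (Γ Δ Γ' Δ' : Multiset KFormula) : Prop where
  subset_fst : Γ ⊆ Γ'
  subset_snd : Δ ⊆ Δ'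
  fst_within : Γ'.toFinset ⊆ u
  snd_within : Δ'.toFinset ⊆ u
  card_lt : Γ.toFinset.card + Δ.toFinset.card < Γ'.toFinset.card + Δ'.toFinset.card

lemma toFinset_cons_subset {A : KFormula} (hA : A ∈ u) (hΓ : Γ.toFinset ⊆ u) :
    (A ::ₘ Γ).toFinset ⊆ u := by
  simp [Multiset.toFinset_cons, Finset.insert_subset_iff, hA, hΓ]

lemma card_toFinset_le_cons (A : KFormula) (Γ : Multiset KFormula) :
    Γ.toFinset.card ≤ (A ::ₘ Γ).toFinset.card :=
  Finset.card_le_card (by simp [Multiset.toFinset_cons, Finset.subset_insert])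

lemma card_toFinset_lt_cons {A : KFormula} (hA : A ∉ Γ) :
    Γ.toFinset.card < (A ::ₘ Γ).toFinset.card := by
  simp [Multiset.toFinset_cons, Finset.card_insert_of_notMem, hA]

lemma growsWithin_cons_left {A : KFormula} (hA : A ∈ u) (hAΓ : A ∉ Γ) (hΓ : Γ.toFinset ⊆ u)
    (hΔ : Δ.toFinset ⊆ u) : GrowsWithin u Γ Δ (A ::ₘ Γ) Δ :=
  ⟨Multiset.subset_cons Γ A, Multiset.Subset.refl Δ, toFinset_cons_subset hA hΓ, hΔ,
    by have := card_toFinset_lt_cons hAΓ; omega⟩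

lemma growsWithin_cons_right {A : KFormula} (hA : A ∈ u) (hAΔ : A ∉ Δ) (hΓ : Γ.toFinset ⊆ u)
    (hΔ : Δ.toFinset ⊆ u) : GrowsWithin u Γ Δ Γ (A ::ₘ Δ) :=
  ⟨Multiset.Subset.refl Γ, Multiset.subset_cons Δ A, hΓ, toFinset_cons_subset hA hΔ,
    by have := card_toFinset_lt_cons hAΔ; omega⟩

lemma growsWithin_cons_cons {A B : KFormula} (hA : A ∈ u) (hB : B ∈ u) (hnew : A ∉ Γ ∨ B ∉ Δ)
    (hΓ : Γ.toFinset ⊆ u) (hΔ : Δ.toFinset ⊆ u) : GrowsWithin u Γ Δ (A ::ₘ Γ) (B ::ₘ Δ) := by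
  refine ⟨Multiset.subset_cons Γ A, Multiset.subset_cons Δ B, toFinset_cons_subset hA hΓ,
    toFinset_cons_subset hB hΔ, ?_⟩
  have := card_toFinset_le_cons A Γ
  have := card_toFinset_le_cons B Δ
  rcases hnew with h | h
  · have := card_toFinset_lt_cons h; omega
  · have := card_toFinset_lt_cons h; omega

lemma Consistent.exists_growsWithin (hu : SubformulaClosed u) (hΓ : Γ.toFinset ⊆ u)
    (hΔ : Δ.toFinset ⊆ u) (h : Consistent anc Γ Δ) (hprop : ¬ PropSaturated (Γ, Δ)) :
    ∃ Γ' Δ', GrowsWithin u Γ Δ Γ' Δ' ∧ Consistent anc Γ' Δ' := by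
  simp only [PropSaturated, not_and_or, not_forall, not_or] at hprop
  rcases hprop with ⟨A, B, hm, hAΔ, hBΓ⟩ | ⟨A, B, hm, hnew⟩
  · have ⟨hA, hB⟩ := hu.imp_mem (hΓ (Multiset.mem_toFinset.mpr hm))
    rcases h.impL hm with h' | h'
    · exact ⟨_, _, growsWithin_cons_left hB hBΓ hΓ hΔ, h'⟩
    · exact ⟨_, _, growsWithin_cons_right hA hAΔ hΓ hΔ, h'⟩
  · have ⟨hA, hB⟩ := hu.imp_mem (hΔ (Multiset.mem_toFinset.mpr hm))
    exact ⟨_, _, growsWithin_cons_cons hA hB hnew hΓ hΔ, h.impR hm⟩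

def unbox : KFormula → Option KFormula
  | .box A => some A
  | _ => none

def unboxes (Γ : Multiset KFormula) : Multiset KFormula := Γ.filterMap unbox

lemma mem_unboxes {A : KFormula} : A ∈ unboxes Γ ↔ A.box ∈ Γ := by
  rw [unboxes, Multiset.mem_filterMap]
  constructor
  · rintro ⟨B, hB, hBA⟩
    cases B <;> simp only [unbox, reduceCtorEq, Option.some.injEq] at hBA
    exact hBA ▸ hB
  · exact fun h => ⟨A.box, h, rfl⟩

lemma Consistent.add_of_forall_box_mem {Θ Λ : Multiset KFormula} (L : Multiset KFormula)
    (hL : ∀ A ∈ L, A.box ∈ Γ) (h : Consistent (anc ++ [(Γ, Δ)]) Θ Λ) :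
    Consistent (anc ++ [(Γ, Δ)]) (L + Θ) Λ := by
  induction L using Multiset.induction with
  | empty => simpa using h
  | cons A L ih =>
    rw [Multiset.cons_add]
    exact (ih fun B hB => hL B (Multiset.mem_cons_of_mem hB)).boxL1
      (hL A (Multiset.mem_cons_self A L))

lemma Consistent.child {A : KFormula} (h : Consistent anc Γ Δ) (hA : A.box ∈ Δ) :
    Consistent (anc ++ [(Γ, Δ)]) (unboxes Γ) {A} := by
  simpa using (h.boxR hA).add_of_forall_box_mem (unboxes Γ) fun B => mem_unboxes.mp

noncomputable def support (q : Component) : Finset KFormula × Finset KFormula :=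
  (q.1.toFinset, q.2.toFinset)

/-- `anc.getLast?` is the parent; this condition makes the accessibility between a component and
its parent symmetric. -/
def BoxCompatible (anc : KCtx) (Γ : Multiset KFormula) : Prop :=
  ∀ p ∈ anc.getLast?, ∀ A, A.box ∈ Γ → A ∈ p.1

/-- The refuting component and the box witnesses may be ancestors; those become worlds higher up
in the search. -/
def Refuted (anc : KCtx) (Γ Δ : Multiset KFormula) : Prop :=
  ∃ W : Set Component, (∀ q ∈ W, Saturated (W ∪ {q | q ∈ anc}) q) ∧
    ∃ q ∈ W ∪ {q | q ∈ anc}, Γ ⊆ q.1 ∧ Δ ⊆ q.2 ∧ BoxCompatible anc q.1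

/-- The search at `anc` must be restarted one level up, with a new formula in the parent's
antecedent (rule `□_L^2` read backwards). -/
def Restarts (u : Finset KFormula) (anc : KCtx) : Prop :=
  ∃ p ∈ anc.getLast?, ∃ A ∈ u, A ∉ p.1 ∧ Consistent anc.dropLast (A ::ₘ p.1) p.2

lemma Refuted.mono {Γ' Δ' : Multiset KFormula} (h : Refuted anc Γ' Δ') (hΓ : Γ ⊆ Γ')
    (hΔ : Δ ⊆ Δ') : Refuted anc Γ Δ :=
  let ⟨W, hW, q, hq, hΓ', hΔ', hq₁⟩ := h
  ⟨W, hW, q, hq, Multiset.Subset.trans hΓ hΓ', Multiset.Subset.trans hΔ hΔ', hq₁⟩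

lemma refuted_of_support_mem (hback : BoxCompatible anc Γ)
    (hblock : support (Γ, Δ) ∈ anc.map support) : Refuted anc Γ Δ := by
  obtain ⟨q, hq, hsupp⟩ := List.mem_map.mp hblock
  simp only [support, Prod.mk.injEq] at hsupp
  refine ⟨∅, by simp, q, Or.inr hq, Multiset.toFinset_subset.mp hsupp.1.ge,
    Multiset.toFinset_subset.mp hsupp.2.ge, fun p hp A hA => hback p hp A ?_⟩
  simpa [← Multiset.mem_toFinset, hsupp.1] using hA

lemma restarts_of_not_boxCompatible (hu : SubformulaClosed u) (hΓ : Γ.toFinset ⊆ u)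
    (h : Consistent anc Γ Δ) (hback : ¬ BoxCompatible anc Γ) : Restarts u anc := by
  simp only [BoxCompatible, not_forall, exists_prop] at hback
  obtain ⟨p, hp, A, hA, hAp⟩ := hback
  rw [← List.dropLast_append_getLast? p hp] at h
  exact ⟨p, hp, A, hu.box_mem (hΓ (Multiset.mem_toFinset.mpr hA)), hAp, h.boxL2 hA⟩

lemma Restarts.exists_consistent_cons (h : Restarts u (anc ++ [(Γ, Δ)])) :
    ∃ A ∈ u, A ∉ Γ ∧ Consistent anc (A ::ₘ Γ) Δ := by
  simpa [Restarts] using h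

lemma Refuted.of_children (h : Consistent anc Γ Δ) (hprop : PropSaturated (Γ, Δ))
    (hback : BoxCompatible anc Γ)
    (hchild : ∀ A, A.box ∈ Δ → Refuted (anc ++ [(Γ, Δ)]) (unboxes Γ) {A}) :
    Refuted anc Γ Δ := by
  choose W hW q hq hqΓ hqA hqback using hchild
  set V := insert (Γ, Δ) (⋃ (A) (hA), W A hA)
  have hsub : ∀ A hA, W A hA ∪ {q | q ∈ anc ++ [(Γ, Δ)]} ⊆ V ∪ {q | q ∈ anc} := by
    intro A hA q hq
    simp only [Set.mem_union, Set.mem_ofPred_eq, List.mem_append, List.mem_singleton] at hq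
    rcases hq with hq | hq | rfl
    · exact Or.inl (Or.inr (Set.mem_iUnion₂.mpr ⟨A, hA, hq⟩))
    · exact Or.inr hq
    · exact Or.inl (Set.mem_insert _ _)
  have hroot : Saturated (V ∪ {q | q ∈ anc}) (Γ, Δ) := by
    refine ⟨hprop, h.bot_not_mem, fun p => h.atom_not_mem, fun A hA => ?_⟩
    refine ⟨q A hA, hsub A hA (hq A hA), ⟨?_, ?_⟩, hqA A hA (Multiset.mem_singleton_self A)⟩
    · exact fun B hB => hqΓ A hA (mem_unboxes.mpr hB)
    · exact hqback A hA (Γ, Δ) List.getLast?_concat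
  refine ⟨V, fun r hr => ?_, (Γ, Δ), Or.inl (Set.mem_insert _ _), Multiset.Subset.refl Γ,
    Multiset.Subset.refl Δ, hback⟩
  rcases hr with rfl | hr
  · exact hroot
  · obtain ⟨A, hA, hr⟩ := Set.mem_iUnion₂.mp hr
    exact (hW A hA r hr).mono (hsub A hA)

lemma length_le_card_of_nodup_map {α β : Type*} {f : α → β} {l : List α} {s : Finset β}
    (hl : (l.map f).Nodup) (hs : ∀ a ∈ l, f a ∈ s) : l.length ≤ s.card := by
  classical
  rw [← List.length_map f, ← List.toFinset_card_of_nodup hl]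
  refine Finset.card_le_card fun b hb => ?_
  obtain ⟨a, ha, rfl⟩ := List.mem_map.mp (List.mem_toFinset.mp hb)
  exact hs a ha

theorem restarts_or_refuted (hu : SubformulaClosed u) (anc : KCtx) (Γ Δ : Multiset KFormula)
    (hanc : (anc.map support).Nodup) (hancu : ∀ q ∈ anc, support q ∈ u.powerset ×ˢ u.powerset)
    (hΓ : Γ.toFinset ⊆ u) (hΔ : Δ.toFinset ⊆ u) (h : Consistent anc Γ Δ) :
    Restarts u anc ∨ Refuted anc Γ Δ := by
  have grow : ∀ Γ' Δ', GrowsWithin u Γ Δ Γ' Δ' → Consistent anc Γ' Δ' →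
      Restarts u anc ∨ Refuted anc Γ Δ := fun Γ' Δ' hgrow h' =>
    (restarts_or_refuted hu anc Γ' Δ' hanc hancu hgrow.fst_within hgrow.snd_within h').imp_right
      (·.mono hgrow.subset_fst hgrow.subset_snd)
  by_cases hprop : PropSaturated (Γ, Δ)
  swap
  · obtain ⟨Γ', Δ', hgrow, h'⟩ := h.exists_growsWithin hu hΓ hΔ hprop
    exact grow Γ' Δ' hgrow h'
  by_cases hback : BoxCompatible anc Γ
  swap
  · exact Or.inl (restarts_of_not_boxCompatible hu hΓ h hback)
  by_cases hblock : support (Γ, Δ) ∈ anc.map support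
  · exact Or.inr (refuted_of_support_mem hback hblock)
  have hanc' : ((anc ++ [(Γ, Δ)]).map support).Nodup := by
    simp only [List.map_append, List.map_cons, List.map_nil, List.nodup_append, hanc,
      List.nodup_singleton, List.mem_singleton, true_and]
    rintro a ha _ rfl rfl
    exact hblock ha
  have hancu' : ∀ q ∈ anc ++ [(Γ, Δ)], support q ∈ u.powerset ×ˢ u.powerset := by
    intro q hq
    rcases List.mem_append.mp hq with hq | hq
    · exact hancu q hq
    · simp [List.mem_singleton.mp hq, support, hΓ, hΔ]
  have hdepth := length_le_card_of_nodup_map hanc' hancu'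
  by_cases hr : Restarts u (anc ++ [(Γ, Δ)])
  · obtain ⟨A, hA, hAΓ, h'⟩ := hr.exists_consistent_cons
    exact grow _ _ (growsWithin_cons_left hA hAΓ hΓ hΔ) h'
  · refine Or.inr (Refuted.of_children h hprop hback fun A hA => ?_)
    have hunboxes : (unboxes Γ).toFinset ⊆ u := fun B hB =>
      hu.box_mem (hΓ (Multiset.mem_toFinset.mpr (mem_unboxes.mp (Multiset.mem_toFinset.mp hB))))
    have hAu : ({A} : Multiset KFormula).toFinset ⊆ u := by
      simpa using hu.box_mem (hΔ (Multiset.mem_toFinset.mpr hA))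
    exact (restarts_or_refuted hu _ (unboxes Γ) {A} hanc' hancu' hunboxes hAu
      (h.child hA)).resolve_left hr
termination_by ((u.powerset ×ˢ u.powerset).card - anc.length,
  2 * u.card - (Γ.toFinset.card + Δ.toFinset.card))
decreasing_by
  · have := Finset.card_le_card hgrow.fst_within
    have := Finset.card_le_card hgrow.snd_within
    exact Prod.Lex.right _ (by have := hgrow.card_lt; omega)
  · rw [List.length_append, List.length_singleton] at hdepth ⊢
    exact Prod.Lex.left _ _ (by omega)

theorem exists_saturated_of_consistent {u : Finset KFormula} {Γ Δ : Multiset KFormula}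
    (hu : SubformulaClosed u) (hΓ : Γ.toFinset ⊆ u) (hΔ : Δ.toFinset ⊆ u)
    (h : Consistent [] Γ Δ) :
    ∃ W : Set Component, (∀ q ∈ W, Saturated W q) ∧ ∃ q ∈ W, Γ ⊆ q.1 ∧ Δ ⊆ q.2 := by
  rcases restarts_or_refuted hu [] Γ Δ List.nodup_nil (by simp) hΓ hΔ h with
    ⟨p, hp, -⟩ | ⟨W, hW, q, hq, hΓq, hΔq, -⟩
  · simp at hp
  · simp only [List.not_mem_nil, Set.ofPred_false, Set.union_empty] at hW hq
    exact ⟨W, hW, q, hq, hΓq, hΔq⟩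

end Search

end LNSKB

/-- Completeness of LNS_KB: every mono-modal formula built from atoms, ⊥, →, □
valid over symmetric Kripke models is derivable. -/
theorem lnskb_complete (φ : KFormula) (hφ : φ.NoDia)
    (hv : ∀ (W : Type) (_ : Nonempty W) (R : W → W → Prop),
      (∀ x y, R x y → R y x) →
        ∀ (V : W → ℕ → Prop) (w : W), KForce R V w φ) :
    DerivKB (KLNS.single 0 {φ}) := by
  by_contra hD
  obtain ⟨W, hW, q, hq, -, hφq⟩ := LNSKB.exists_saturated_of_consistent
    (LNSKB.subformulaClosed_subformulas φ) (by simp) (by simp [LNSKB.mem_subformulas_self]) hD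
  exact (LNSKB.truth_lemma hW hφ ⟨q, hq⟩).2 (hφq (Multiset.mem_singleton_self φ))
    (hv W ⟨⟨q, hq⟩⟩ _ (fun _ _ => LNSKB.Accessible.symm) _ ⟨q, hq⟩)
end
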